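/- arXiv:1710.10694 — 6 statements merged into one kernel-verified Lean document; each statement's English description precedes it below -/
import Mathlib

section
/- Let (Ω, μ) be a probability space and T : Ω → Ω an ergodic measure-preserving transformation. Let B : Ω → GL(p, ℝ), C : Ω → GL(q, ℝ) and U : Ω → Mat(p×q, ℝ) be measurable, with ∫_Ω log⁺‖U(ω)‖ dμ(ω) < ∞, and let A(ω) ∈ GL(p+q, ℝ) be the block upper-triangular matrix with diagonal blocks B(ω), C(ω) and upper-right block U(ω). Suppose there exist λ_E ∈ ℝ and λ_F ∈ ℝ ∪ {−∞} with λ_E > λ_F such that for μ-a.e. ω: for every nonzero e ∈ ℝ^p, (1/N) log ‖B^N(ω) e‖ → λ_E, uniformly over ‖e‖ = 1 for fixed ω, and for every nonzero f ∈ ℝ^q, (1/N) log ‖C^N(ω) f‖ → λ_F, uniformly over ‖f‖ = 1 for fixed ω. Then there exists a measurable map τ : Ω → Mat(p×q, ℝ), defined for μ-a.e. ω, satisfying B(ω) τ(ω) + U(ω) = τ(Tω) C(ω) for μ-a.e. ω; consequently the graph subspaces σ(ω) := { (τ(ω) w, w) : w ∈ ℝ^q } ⊂ ℝ^{p+q}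 satisfy A(ω) σ(ω) = σ(Tω) and ℝ^{p+q} = (ℝ^p × {0}) ⊕ σ(ω) for μ-a.e. ω. -/
open MeasureTheory Filter Topology

/-- The operator norm of a rectangular real matrix, with respect to Euclidean norms. -/
noncomputable def matOpNorm' {p q : ℕ} (M : Matrix (Fin p) (Fin q) ℝ) : ℝ :=
  ‖LinearMap.toContinuousLinearMap (Matrix.toEuclideanLin (𝕜 := ℝ) M)‖

/-- The cocycle iterates `M^N(ω) = M(T^{N-1} ω) ⋯ M(T ω) M(ω)`. -/
noncomputable def cocycIter {Ω : Type*} {d : ℕ} (T : Ω → Ω)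
    (M : Ω → Matrix (Fin d) (Fin d) ℝ) : ℕ → Ω → Matrix (Fin d) (Fin d) ℝ
  | 0, _ => 1
  | n + 1, ω => cocycIter T M n (T ω) * M ω

/-- The linear map `w ↦ (τ w, w)` from `ℝ^q` to `ℝ^{p+q} = ℝ^p ⊕ ℝ^q`, whose range is the
graph subspace `σ = {(τ w, w) : w ∈ ℝ^q}`. -/
noncomputable def graphMap {p q : ℕ} (τ : Matrix (Fin p) (Fin q) ℝ) :
    (Fin q → ℝ) →ₗ[ℝ] ((Fin p ⊕ Fin q) → ℝ) where
  toFun w := Sum.elim (τ.mulVec w) w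
  map_add' w w' := by
    funext x
    cases x <;> simp [Matrix.mulVec_add]
  map_smul' c w := by
    funext x
    cases x <;> simp [Matrix.mulVec_smul]

/-- The subspace `ℝ^p × {0}` of `ℝ^{p+q}`. -/
noncomputable def firstFactor (p q : ℕ) : Submodule ℝ ((Fin p ⊕ Fin q) → ℝ) :=
  LinearMap.ker (LinearMap.funLeft ℝ ℝ (Sum.inr : Fin q → Fin p ⊕ Fin q))

/-!
The invariant graph has slope `τ(ω) = -∑ₙ (B^{n+1}(ω))⁻¹ U(Tⁿω) Cⁿ(ω)`. Pick `λ_F < a < λ_E` and a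
small `ε > 0`. Uniform growth gives `‖(Bⁿ(ω))⁻¹‖ ≤ e^{-(λ_E - ε)n}` and `‖Cⁿ(ω)‖ ≤ e^{an}`, and
Borel–Cantelli, applied to the integrable `log⁺‖U‖` along the measure-preserving orbit, gives
`‖U(Tⁿω)‖ ≤ e^{εn}` for large `n`; so the series converges geometrically. Multiplying it by `B(ω)`
and shifting the index by one gives `B(ω)τ(ω) + U(ω) = τ(Tω)C(ω)`, which says exactly that `A(ω)`
maps the graph of `τ(ω)` onto the graph of `τ(Tω)`. The graph of any `τ` is a complement of
`ℝ^p × {0}`, being the range of a section of the projection onto `ℝ^q`.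
-/

-- `‖M‖` is the Euclidean operator norm of a matrix, definitionally `matOpNorm' M`.
open scoped Matrix.Norms.L2Operator

section EntrywiseMeasurable

variable {Ω : Type*} [MeasurableSpace Ω] {l m n : Type*}

def EntrywiseMeasurable (f : Ω → Matrix m n ℝ) : Prop :=
  ∀ i j, Measurable fun ω => f ω i j

lemma EntrywiseMeasurable.comp {f : Ω → Matrix m n ℝ} (hf : EntrywiseMeasurable f)
    {g : Ω → Ω} (hg : Measurable g) : EntrywiseMeasurable fun ω => f (g ω) :=
  fun i j => (hf i j).comp hg

lemma EntrywiseMeasurable.mul [Fintype m] {f : Ω → Matrix l m ℝ} {g : Ω → Matrix m n ℝ}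
    (hf : EntrywiseMeasurable f) (hg : EntrywiseMeasurable g) :
    EntrywiseMeasurable fun ω => f ω * g ω := fun i j => by
  simp_rw [Matrix.mul_apply]
  exact Finset.measurable_sum _ fun k _ => (hf i k).mul (hg k j)

lemma EntrywiseMeasurable.det [Fintype n] [DecidableEq n] {f : Ω → Matrix n n ℝ}
    (hf : EntrywiseMeasurable f) : Measurable fun ω => (f ω).det := by
  simp_rw [Matrix.det_apply']
  exact Finset.measurable_sum _ fun σ _ =>
    (Finset.measurable_prod _ fun i _ => hf _ _).const_mul _

lemma EntrywiseMeasurable.inv [Fintype n] [DecidableEq n] {f : Ω → Matrix n n ℝ}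
    (hf : EntrywiseMeasurable f) : EntrywiseMeasurable fun ω => (f ω)⁻¹ := fun i j => by
  simp_rw [Matrix.inv_def, Matrix.smul_apply, Ring.inverse_eq_inv', smul_eq_mul,
    Matrix.adjugate_apply]
  refine hf.det.inv.mul (EntrywiseMeasurable.det fun k l => ?_)
  simp_rw [Matrix.updateRow_apply]
  split_ifs
  · exact measurable_const
  · exact hf k l

lemma EntrywiseMeasurable.cocycIter {d : ℕ} {T : Ω → Ω} (hT : Measurable T)
    {M : Ω → Matrix (Fin d) (Fin d) ℝ} (hM : EntrywiseMeasurable M) (n : ℕ) :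
    EntrywiseMeasurable (cocycIter T M n) := by
  induction n with
  | zero => exact fun i j => measurable_const
  | succ n ih => exact (ih.comp hT).mul hM

end EntrywiseMeasurable

lemma isUnit_cocycIter {Ω : Type*} {d : ℕ} {T : Ω → Ω} {M : Ω → Matrix (Fin d) (Fin d) ℝ}
    (hM : ∀ ω, IsUnit (M ω)) (n : ℕ) (ω : Ω) : IsUnit (cocycIter T M n ω) := by
  induction n generalizing ω with
  | zero => exact isUnit_one
  | succ n ih => exact (ih (T ω)).mul (hM ω)

section OperatorNorm

variable {m n : Type*} [Fintype m] [Fintype n] [DecidableEq n]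

lemma LinearMap.mul_norm_le_of_forall_norm_eq_one {E F : Type*} [NormedAddCommGroup E]
    [NormedSpace ℝ E] [NormedAddCommGroup F] [NormedSpace ℝ F] (f : E →ₗ[ℝ] F) {c : ℝ}
    (h : ∀ v, ‖v‖ = 1 → c ≤ ‖f v‖) (v : E) : c * ‖v‖ ≤ ‖f v‖ := by
  rcases eq_or_ne v 0 with rfl | hv
  · simp
  · have hv' : 0 < ‖v‖ := norm_pos_iff.mpr hv
    have := h (‖v‖⁻¹ • v) (norm_smul_inv_norm hv)
    rw [map_smul, norm_smul, norm_inv, norm_norm, le_inv_mul_iff₀ hv'] at this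
    linarith

lemma Matrix.l2_opNorm_le_of_forall_norm_eq_one (M : Matrix m n ℝ) {c : ℝ} (hc : 0 ≤ c)
    (h : ∀ v, ‖v‖ = 1 → ‖Matrix.toEuclideanLin M v‖ ≤ c) : ‖M‖ ≤ c :=
  ContinuousLinearMap.opNorm_le_of_unit_norm hc h

lemma Matrix.l2_opNorm_inv_le_of_forall_norm_eq_one {M : Matrix n n ℝ} (hM : IsUnit M)
    {c : ℝ} (hc : 0 < c) (h : ∀ v, ‖v‖ = 1 → c ≤ ‖Matrix.toEuclideanLin M v‖) :
    ‖M⁻¹‖ ≤ c⁻¹ := by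
  refine M⁻¹.l2_opNorm_le_of_forall_norm_eq_one (inv_nonneg.mpr hc.le) fun v hv => ?_
  have hMM : Matrix.toEuclideanLin M (Matrix.toEuclideanLin M⁻¹ v) = v := by
    simp [Matrix.toLpLin_apply, Matrix.mulVec_mulVec,
      Matrix.mul_nonsing_inv _ ((M.isUnit_iff_isUnit_det).mp hM)]
  have := (Matrix.toEuclideanLin M).mul_norm_le_of_forall_norm_eq_one h
    (Matrix.toEuclideanLin M⁻¹ v)
  rw [hMM, hv] at this
  simpa using (le_inv_mul_iff₀ hc).mpr this

end OperatorNorm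

section Growth

variable {n : Type*} [Fintype n] [DecidableEq n]

lemma Matrix.toEuclideanLin_injective_of_isUnit {M : Matrix n n ℝ} (hM : IsUnit M) :
    Function.Injective (Matrix.toEuclideanLin M) :=
  (WithLp.toLp_injective 2).comp
    ((Matrix.mulVec_injective_iff_isUnit.mpr hM).comp (WithLp.ofLp_injective 2))

lemma eventually_l2_opNorm_inv_le_exp {M : ℕ → Matrix n n ℝ} (hM : ∀ N, IsUnit (M N)) {b : ℝ}
    (h : ∀ᶠ N : ℕ in atTop, ∀ e : EuclideanSpace ℝ n, ‖e‖ = 1 →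
      b < Real.log ‖Matrix.toEuclideanLin (M N) e‖ / N) :
    ∀ᶠ N : ℕ in atTop, ‖(M N)⁻¹‖ ≤ Real.exp (-(b * N)) := by
  filter_upwards [h, eventually_gt_atTop 0] with N hN hN0
  rw [Real.exp_neg]
  refine Matrix.l2_opNorm_inv_le_of_forall_norm_eq_one (hM N) (Real.exp_pos _) fun e he => ?_
  have hMe : 0 < ‖Matrix.toEuclideanLin (M N) e‖ := by
    rw [norm_pos_iff, ← map_zero (Matrix.toEuclideanLin (M N)),
      (Matrix.toEuclideanLin_injective_of_isUnit (hM N)).ne_iff]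
    exact ne_zero_of_norm_ne_zero (by simp [he])
  rw [← Real.exp_log hMe, Real.exp_le_exp, ← le_div_iff₀ (by positivity)]
  exact (hN e he).le

lemma eventually_l2_opNorm_le_exp {M : ℕ → Matrix n n ℝ} {a : ℝ}
    (h : ∀ᶠ N : ℕ in atTop, ∀ f : EuclideanSpace ℝ n, ‖f‖ = 1 →
      Real.log ‖Matrix.toEuclideanLin (M N) f‖ / N < a) :
    ∀ᶠ N : ℕ in atTop, ‖M N‖ ≤ Real.exp (a * N) := by
  filter_upwards [h, eventually_gt_atTop 0] with N hN hN0
  refine (M N).l2_opNorm_le_of_forall_norm_eq_one (Real.exp_nonneg _) fun f hf => ?_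
  calc _ ≤ Real.exp (Real.log ‖Matrix.toEuclideanLin (M N) f‖) := Real.le_exp_log _
    _ ≤ _ := Real.exp_le_exp.mpr ((div_lt_iff₀ (by positivity)).mp (hN f hf)).le

end Growth

lemma MeasureTheory.MeasurePreserving.ae_eventually_comp_iterate_le {Ω : Type*}
    [MeasurableSpace Ω] {μ : Measure Ω} [IsProbabilityMeasure μ] {T : Ω → Ω}
    (hT : MeasurePreserving T μ μ) {g : Ω → ℝ} (hg : Integrable g μ) (hg0 : 0 ≤ g)
    {ε : ℝ} (hε : 0 < ε) :
    ∀ᵐ ω ∂μ, ∀ᶠ n : ℕ in atTop, g (T^[n] ω) ≤ ε * n := by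
  let _ : MeasureSpace Ω := ⟨μ⟩
  set s : ℕ → Set Ω := fun n => {ω | g ω / ε ∈ Set.Ioi (n : ℝ)}
  have hsum : ∑' n, μ (s n) ≠ ⊤ :=
    (ProbabilityTheory.tsum_prob_mem_Ioi_lt_top (hg.div_const ε)
      fun ω => div_nonneg (hg0 ω) hε.le).ne
  have hiter (n : ℕ) : μ (T^[n] ⁻¹' s n) = μ (s n) :=
    (hT.iterate n).measure_preimage
      ((hg.aemeasurable.div_const ε).nullMeasurable measurableSet_Ioi)
  filter_upwards [ae_eventually_notMem (s := fun n => T^[n] ⁻¹' s n)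
    (by simpa only [hiter] using hsum)] with ω hω
  filter_upwards [hω] with n hn
  simpa [s, div_le_iff₀ hε, mul_comm] using hn

lemma HasSum.matrix_mul_left {ι l m n : Type*} [Fintype m] {f : ι → Matrix m n ℝ}
    {S : Matrix m n ℝ} (A : Matrix l m ℝ) (h : HasSum f S) :
    HasSum (fun i => A * f i) (A * S) :=
  h.map (Matrix.addMonoidHomMulLeft A) (continuous_const.matrix_mul continuous_id)

lemma HasSum.matrix_mul_right {ι l m n : Type*} [Fintype m] {f : ι → Matrix l m ℝ}
    {S : Matrix l m ℝ} (A : Matrix m n ℝ) (h : HasSum f S) :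
    HasSum (fun i => f i * A) (S * A) :=
  h.map (Matrix.addMonoidHomMulRight A) (continuous_id.matrix_mul continuous_const)

section GraphSlope

variable {Ω : Type*} {p q : ℕ} (T : Ω → Ω) (B : Ω → Matrix (Fin p) (Fin p) ℝ)
  (C : Ω → Matrix (Fin q) (Fin q) ℝ) (U : Ω → Matrix (Fin p) (Fin q) ℝ)

noncomputable def graphSlopeTerm (n : ℕ) (ω : Ω) : Matrix (Fin p) (Fin q) ℝ :=
  (cocycIter T B (n + 1) ω)⁻¹ * U (T^[n] ω) * cocycIter T C n ω

/-- Summed entrywise so that it is measurable; the entries are junk where the series diverges. -/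
noncomputable def graphSlope (ω : Ω) : Matrix (Fin p) (Fin q) ℝ :=
  Matrix.of fun i j => -∑' n, graphSlopeTerm T B C U n ω i j

variable {T B C U}

lemma graphSlope_eq_neg_tsum {ω : Ω} (h : Summable fun n => graphSlopeTerm T B C U n ω) :
    graphSlope T B C U ω = -∑' n, graphSlopeTerm T B C U n ω := by
  ext i j
  exact congrArg Neg.neg (Pi.hasSum.mp (Pi.hasSum.mp h.hasSum i) j).tsum_eq

lemma EntrywiseMeasurable.graphSlope [MeasurableSpace Ω] (hT : Measurable T)
    (hB : EntrywiseMeasurable B) (hC : EntrywiseMeasurable C) (hU : EntrywiseMeasurable U) :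
    EntrywiseMeasurable (graphSlope T B C U) := fun i j =>
  (Measurable.tsum fun n => ((((hB.cocycIter hT (n + 1)).inv).mul
    (hU.comp (hT.iterate n))).mul (hC.cocycIter hT n)) i j).neg

lemma mul_graphSlopeTerm_zero {ω : Ω} (hB : IsUnit (B ω)) :
    B ω * graphSlopeTerm T B C U 0 ω = U ω := by
  simp [graphSlopeTerm, cocycIter, ← Matrix.mul_assoc,
    Matrix.mul_nonsing_inv _ ((B ω).isUnit_iff_isUnit_det.mp hB)]

lemma mul_graphSlopeTerm_succ {ω : Ω} (hB : IsUnit (B ω)) (n : ℕ) :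
    B ω * graphSlopeTerm T B C U (n + 1) ω = graphSlopeTerm T B C U n (T ω) * C ω := by
  simp only [graphSlopeTerm, cocycIter, Matrix.mul_inv_rev, Function.iterate_succ_apply]
  simp [← Matrix.mul_assoc, Matrix.mul_nonsing_inv _ ((B ω).isUnit_iff_isUnit_det.mp hB)]

lemma mul_graphSlope_add_eq_graphSlope_mul {ω : Ω} (hB : IsUnit (B ω))
    (hω : Summable fun n => graphSlopeTerm T B C U n ω)
    (hTω : Summable fun n => graphSlopeTerm T B C U n (T ω)) :
    B ω * graphSlope T B C U ω + U ω = graphSlope T B C U (T ω) * C ω := by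
  have hshift : HasSum (fun n => B ω * graphSlopeTerm T B C U (n + 1) ω)
      ((∑' n, graphSlopeTerm T B C U n (T ω)) * C ω) := by
    simpa only [mul_graphSlopeTerm_succ hB] using hTω.hasSum.matrix_mul_right (C ω)
  have hsum : B ω * ∑' n, graphSlopeTerm T B C U n ω
      = U ω + (∑' n, graphSlopeTerm T B C U n (T ω)) * C ω := by
    refine (hω.hasSum.matrix_mul_left (B ω)).unique ?_
    simpa only [mul_graphSlopeTerm_zero hB]
      using HasSum.zero_add (f := fun n => B ω * graphSlopeTerm T B C U n ω) hshift
  rw [graphSlope_eq_neg_tsum hω, graphSlope_eq_neg_tsum hTω, Matrix.mul_neg, Matrix.neg_mul, hsum]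
  abel

lemma summable_graphSlopeTerm {ω : Ω} {a b ε : ℝ} (hgap : a + ε < b)
    (hB : ∀ᶠ n : ℕ in atTop, ‖(cocycIter T B n ω)⁻¹‖ ≤ Real.exp (-(b * n)))
    (hC : ∀ᶠ n : ℕ in atTop, ‖cocycIter T C n ω‖ ≤ Real.exp (a * n))
    (hU : ∀ᶠ n : ℕ in atTop, ‖U (T^[n] ω)‖ ≤ Real.exp (ε * n)) :
    Summable fun n => graphSlopeTerm T B C U n ω := by
  refine Summable.of_norm_bounded_eventually_nat
    ((Real.summable_exp_nat_mul_iff.mpr (sub_neg.mpr hgap)).mul_left (Real.exp (-b))) ?_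
  filter_upwards [(tendsto_add_atTop_nat 1).eventually hB, hC, hU] with n hBn hCn hUn
  calc ‖graphSlopeTerm T B C U n ω‖
      ≤ ‖(cocycIter T B (n + 1) ω)⁻¹‖ * ‖U (T^[n] ω)‖ * ‖cocycIter T C n ω‖ :=
        (Matrix.l2_opNorm_mul _ _).trans (by gcongr; exact Matrix.l2_opNorm_mul _ _)
    _ ≤ Real.exp (-(b * ↑(n + 1))) * Real.exp (ε * n) * Real.exp (a * n) := by gcongr
    _ = Real.exp (-b) * Real.exp (n * (a + ε - b)) := by
      simp only [← Real.exp_add]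
      push_cast
      ring_nf

end GraphSlope

section GraphSubspace

variable {p q : ℕ}

lemma map_range_graphMap_fromBlocks {B : Matrix (Fin p) (Fin p) ℝ}
    {C : Matrix (Fin q) (Fin q) ℝ} (hC : IsUnit C) {U τ τ' : Matrix (Fin p) (Fin q) ℝ}
    (h : B * τ + U = τ' * C) :
    (LinearMap.range (graphMap τ)).map (Matrix.mulVecLin (Matrix.fromBlocks B U 0 C))
      = LinearMap.range (graphMap τ') := by
  have hcomm : (Matrix.mulVecLin (Matrix.fromBlocks B U 0 C)).comp (graphMap τ)
      = (graphMap τ').comp (Matrix.mulVecLin C) := by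
    refine LinearMap.ext fun w => ?_
    simp only [LinearMap.comp_apply, Matrix.mulVecLin_apply, graphMap, LinearMap.coe_mk,
      AddHom.coe_mk, Matrix.fromBlocks_mulVec, Sum.elim_comp_inl, Sum.elim_comp_inr,
      Matrix.mulVec_mulVec, ← Matrix.add_mulVec, h, Matrix.zero_mul, zero_add]
  rw [← LinearMap.range_comp, hcomm, LinearMap.range_comp,
    LinearMap.range_eq_top.mpr (Matrix.mulVec_surjective_iff_isUnit.mpr hC), Submodule.map_top]

lemma isCompl_firstFactor_range_graphMap (τ : Matrix (Fin p) (Fin q) ℝ) :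
    IsCompl (firstFactor p q) (LinearMap.range (graphMap τ)) := by
  set π := LinearMap.funLeft ℝ ℝ (Sum.inr : Fin q → Fin p ⊕ Fin q)
  have hπ : π.comp (graphMap τ) = LinearMap.id := rfl
  have hproj : LinearMap.IsProj (LinearMap.range (graphMap τ)) ((graphMap τ).comp π) :=
    ⟨fun x => LinearMap.mem_range_self _ _, by
      rintro _ ⟨w, rfl⟩
      exact congrArg (graphMap τ) (LinearMap.congr_fun hπ w)⟩
  have := hproj.isCompl
  rw [LinearMap.ker_comp_of_ker_eq_bot _ (LinearMap.ker_eq_bot_of_inverse hπ)] at this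
  exact this.symm

end GraphSubspace

theorem unusual_growth_implies_splitting_general
    {Ω : Type*} [MeasurableSpace Ω] {μ : Measure Ω} [IsProbabilityMeasure μ]
    {T : Ω → Ω} (hT : Ergodic T μ) {p q : ℕ}
    (B : Ω → Matrix.GeneralLinearGroup (Fin p) ℝ)
    (C : Ω → Matrix.GeneralLinearGroup (Fin q) ℝ)
    (U : Ω → Matrix (Fin p) (Fin q) ℝ)
    (hBmeas : ∀ i j, Measurable fun ω => (B ω : Matrix (Fin p) (Fin p) ℝ) i j)
    (hCmeas : ∀ i j, Measurable fun ω => (C ω : Matrix (Fin q) (Fin q) ℝ) i j)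
    (hUmeas : ∀ i j, Measurable fun ω => U ω i j)
    (hUint : Integrable (fun ω => max (Real.log (matOpNorm' (U ω))) 0) μ)
    (lamE : ℝ) (lamF : EReal) (hlt : lamF < (lamE : EReal))
    (hB : ∀ᵐ ω ∂μ,
      (∀ e : EuclideanSpace ℝ (Fin p), e ≠ 0 →
        Tendsto (fun N : ℕ =>
            Real.log ‖Matrix.toEuclideanLin (cocycIter T (fun ω' =>
              (B ω' : Matrix (Fin p) (Fin p) ℝ)) N ω) e‖ / (N : ℝ))
          atTop (𝓝 lamE)) ∧
      (∀ ε > (0:ℝ), ∀ᶠ N : ℕ in atTop, ∀ e : EuclideanSpace ℝ (Fin p), ‖e‖ = 1 →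
        |Real.log ‖Matrix.toEuclideanLin (cocycIter T (fun ω' =>
            (B ω' : Matrix (Fin p) (Fin p) ℝ)) N ω) e‖ / (N : ℝ) - lamE| < ε))
    (hC : ∀ᵐ ω ∂μ,
      (∀ f : EuclideanSpace ℝ (Fin q), f ≠ 0 →
        Tendsto (fun N : ℕ =>
            ((Real.log ‖Matrix.toEuclideanLin (cocycIter T (fun ω' =>
              (C ω' : Matrix (Fin q) (Fin q) ℝ)) N ω) f‖ / (N : ℝ) : ℝ) : EReal))
          atTop (𝓝 lamF)) ∧
      (∀ V : Set EReal, V ∈ 𝓝 lamF →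
        ∀ᶠ N : ℕ in atTop, ∀ f : EuclideanSpace ℝ (Fin q), ‖f‖ = 1 →
          ((Real.log ‖Matrix.toEuclideanLin (cocycIter T (fun ω' =>
              (C ω' : Matrix (Fin q) (Fin q) ℝ)) N ω) f‖ / (N : ℝ) : ℝ) : EReal) ∈ V)) :
    ∃ τ : Ω → Matrix (Fin p) (Fin q) ℝ,
      (∀ i j, Measurable fun ω => τ ω i j) ∧
      (∀ᵐ ω ∂μ,
        (B ω : Matrix (Fin p) (Fin p) ℝ) * τ ω + U ω
          = τ (T ω) * (C ω : Matrix (Fin q) (Fin q) ℝ)) ∧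
      (∀ᵐ ω ∂μ,
        (LinearMap.range (graphMap (τ ω))).map
            (Matrix.mulVecLin
              (Matrix.fromBlocks (B ω : Matrix (Fin p) (Fin p) ℝ) (U ω)
                0 (C ω : Matrix (Fin q) (Fin q) ℝ)))
          = LinearMap.range (graphMap (τ (T ω))) ∧
        IsCompl (firstFactor p q) (LinearMap.range (graphMap (τ ω)))) := by
  have hTm := hT.toMeasurePreserving
  obtain ⟨a, hFa, haE⟩ := EReal.exists_between_coe_real hlt
  have haE : a < lamE := EReal.coe_lt_coe_iff.mp haE
  obtain ⟨ε, hε, hgap⟩ : ∃ ε > 0, a + ε < lamE - ε := ⟨(lamE - a) / 3, by linarith, by linarith⟩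
  set B' := fun ω => (B ω : Matrix (Fin p) (Fin p) ℝ)
  set C' := fun ω => (C ω : Matrix (Fin q) (Fin q) ℝ)
  have hsum : ∀ᵐ ω ∂μ, Summable fun n => graphSlopeTerm T B' C' U n ω := by
    filter_upwards [hB, hC, hTm.ae_eventually_comp_iterate_le hUint (fun _ => le_max_right _ _) hε]
      with ω hBω hCω hUω
    refine summable_graphSlopeTerm hgap
      (eventually_l2_opNorm_inv_le_exp (isUnit_cocycIter (fun ω => (B ω).isUnit) · ω) ?_)
      (eventually_l2_opNorm_le_exp ?_) ?_
    · filter_upwards [hBω.2 ε hε] with N hN e he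
      linarith [(abs_lt.mp (hN e he)).1]
    · filter_upwards [hCω.2 _ (Iio_mem_nhds hFa)] with N hN f hf
      exact EReal.coe_lt_coe_iff.mp (hN f hf)
    · filter_upwards [hUω] with n hn
      calc ‖U (T^[n] ω)‖ ≤ Real.exp (Real.log ‖U (T^[n] ω)‖) := Real.le_exp_log _
        _ ≤ Real.exp (ε * n) := Real.exp_le_exp.mpr ((le_max_left _ _).trans hn)
  have hcoh : ∀ᵐ ω ∂μ,
      B' ω * graphSlope T B' C' U ω + U ω = graphSlope T B' C' U (T ω) * C' ω := by
    filter_upwards [hsum, hTm.quasiMeasurePreserving.tendsto_ae.eventually hsum] with ω hω hTω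
    exact mul_graphSlope_add_eq_graphSlope_mul (B ω).isUnit hω hTω
  refine ⟨graphSlope T B' C' U, EntrywiseMeasurable.graphSlope hTm.measurable hBmeas hCmeas hUmeas,
    hcoh, ?_⟩
  filter_upwards [hcoh] with ω h
  exact ⟨map_range_graphMap_fromBlocks (C ω).isUnit h, isCompl_firstFactor_range_graphMap _⟩

/-- **Unusual growth implies splitting.** -/
theorem unusual_growth_implies_splitting
    {Ω : Type*} [MeasurableSpace Ω] {μ : Measure Ω} [IsProbabilityMeasure μ]
    {T : Ω → Ω} (hT : Ergodic T μ) {p q : ℕ}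
    (B : Ω → Matrix.GeneralLinearGroup (Fin p) ℝ)
    (C : Ω → Matrix.GeneralLinearGroup (Fin q) ℝ)
    (U : Ω → Matrix (Fin p) (Fin q) ℝ)
    (hBmeas : ∀ i j, Measurable fun ω => (B ω : Matrix (Fin p) (Fin p) ℝ) i j)
    (hCmeas : ∀ i j, Measurable fun ω => (C ω : Matrix (Fin q) (Fin q) ℝ) i j)
    (hUmeas : ∀ i j, Measurable fun ω => U ω i j)
    (hUint : Integrable (fun ω => max (Real.log (matOpNorm' (U ω))) 0) μ)
    (lamE : ℝ) (lamF : EReal) (hlamF : lamF ≠ ⊤) (hlt : lamF < (lamE : EReal))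
    (hB : ∀ᵐ ω ∂μ,
      (∀ e : EuclideanSpace ℝ (Fin p), e ≠ 0 →
        Tendsto (fun N : ℕ =>
            Real.log ‖Matrix.toEuclideanLin (cocycIter T (fun ω' =>
              (B ω' : Matrix (Fin p) (Fin p) ℝ)) N ω) e‖ / (N : ℝ))
          atTop (𝓝 lamE)) ∧
      (∀ ε > (0:ℝ), ∀ᶠ N : ℕ in atTop, ∀ e : EuclideanSpace ℝ (Fin p), ‖e‖ = 1 →
        |Real.log ‖Matrix.toEuclideanLin (cocycIter T (fun ω' =>
            (B ω' : Matrix (Fin p) (Fin p) ℝ)) N ω) e‖ / (N : ℝ) - lamE| < ε))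
    (hC : ∀ᵐ ω ∂μ,
      (∀ f : EuclideanSpace ℝ (Fin q), f ≠ 0 →
        Tendsto (fun N : ℕ =>
            ((Real.log ‖Matrix.toEuclideanLin (cocycIter T (fun ω' =>
              (C ω' : Matrix (Fin q) (Fin q) ℝ)) N ω) f‖ / (N : ℝ) : ℝ) : EReal))
          atTop (𝓝 lamF)) ∧
      (∀ V : Set EReal, V ∈ 𝓝 lamF →
        ∀ᶠ N : ℕ in atTop, ∀ f : EuclideanSpace ℝ (Fin q), ‖f‖ = 1 →
          ((Real.log ‖Matrix.toEuclideanLin (cocycIter T (fun ω' =>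
              (C ω' : Matrix (Fin q) (Fin q) ℝ)) N ω) f‖ / (N : ℝ) : ℝ) : EReal) ∈ V)) :
    ∃ τ : Ω → Matrix (Fin p) (Fin q) ℝ,
      (∀ i j, Measurable fun ω => τ ω i j) ∧
      (∀ᵐ ω ∂μ,
        (B ω : Matrix (Fin p) (Fin p) ℝ) * τ ω + U ω
          = τ (T ω) * (C ω : Matrix (Fin q) (Fin q) ℝ)) ∧
      (∀ᵐ ω ∂μ,
        (LinearMap.range (graphMap (τ ω))).map
            (Matrix.mulVecLin
              (Matrix.fromBlocks (B ω : Matrix (Fin p) (Fin p) ℝ) (U ω)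
                0 (C ω : Matrix (Fin q) (Fin q) ℝ)))
          = LinearMap.range (graphMap (τ (T ω))) ∧
        IsCompl (firstFactor p q) (LinearMap.range (graphMap (τ ω)))) :=
  unusual_growth_implies_splitting_general hT B C U hBmeas hCmeas hUmeas hUint lamE lamF hlt hB hC
end

section
/- Let (X, d) be a proper metric space with basepoint x₀ ∈ X, and let f : X → X be a semicontraction, i.e., d(f x, f y) ≤ d(x, y) for all x, y ∈ X. Let l := lim_{n→∞} (1/n) d(x₀, fⁿ x₀) (the limit exists by subadditivity). Then there exists a function h : X → ℝ in the closure of Φ(X) (in the topology of pointwise convergence on C(X, ℝ)) such that: (a) h(f^k x₀) ≤ −l·k for every integer k ≥ 0, and (b) for every x ∈ X, lim_{N→∞} −(1/N) h(f^N x) = l. -/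
open Filter Topology Set

/-!
Write `a n = d(x₀, fⁿ x₀)`. For `c < l` the sequence `a n - c n` tends to infinity, so it has
running maxima `n` arbitrarily far out, and by semicontraction the horofunction based at `fⁿ x₀`
satisfies `h(fᵏ x₀) ≤ a (n - k) - a n ≤ -c k` for all `k ≤ n`. The functions `h_x` are 1-Lipschitz
and vanish at `x₀`; such functions form a compact subset of `X → ℝ` by Tychonoff, so letting
`c ↑ l` and `n → ∞` produces a limit `h` with `h(fᵏ x₀) ≤ -l k`. Then `-h(fᴺ x₀)` lies between
`l N` and `a N`, and `h(fᴺ x)` differs from `h(fᴺ x₀)` by at most `d(x, x₀)`.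
-/

section Horofunction

variable {X : Type*} [PseudoMetricSpace X]

def horofunctionMap (x₀ x : X) : X → ℝ := fun y => dist x y - dist x x₀

lemma lipschitzWith_horofunctionMap (x₀ x : X) : LipschitzWith 1 (horofunctionMap x₀ x) :=
  LipschitzWith.of_le_add fun y z => by
    simp only [horofunctionMap]
    linarith [dist_triangle x z y, dist_comm y z]

lemma horofunctionMap_apply_self (x₀ x : X) : horofunctionMap x₀ x x₀ = 0 := sub_self _

lemma isCompact_setOf_lipschitzWith_one_apply_eq_zero (x₀ : X) :
    IsCompact {g : X → ℝ | LipschitzWith 1 g ∧ g x₀ = 0} := by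
  refine (isCompact_univ_pi fun y => isCompact_Icc (a := -dist y x₀) (b := dist y x₀))
    |>.of_isClosed_subset ((isClosed_setOfPred_lipschitzWith 1).inter
      (isClosed_eq (continuous_apply x₀) continuous_const)) ?_
  rintro g ⟨hg, hg0⟩ y -
  have := hg.dist_le_mul y x₀
  rwa [hg0, NNReal.coe_one, one_mul, Real.dist_0_eq_abs, abs_le] at this

lemma closure_range_horofunctionMap_subset (x₀ : X) :
    closure (range (horofunctionMap x₀)) ⊆ {g : X → ℝ | LipschitzWith 1 g ∧ g x₀ = 0} :=
  closure_minimal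
    (range_subset_iff.2 fun x =>
      ⟨lipschitzWith_horofunctionMap x₀ x, horofunctionMap_apply_self x₀ x⟩)
    (isCompact_setOf_lipschitzWith_one_apply_eq_zero x₀).isClosed

lemma isCompact_closure_range_horofunctionMap (x₀ : X) :
    IsCompact (closure (range (horofunctionMap x₀))) :=
  (isCompact_setOf_lipschitzWith_one_apply_eq_zero x₀).of_isClosed_subset isClosed_closure
    (closure_range_horofunctionMap_subset x₀)

end Horofunction

lemma tendsto_sub_mul_atTop_of_tendsto_div {a : ℕ → ℝ} {l c : ℝ}
    (ha : Tendsto (fun n : ℕ => a n / n) atTop (𝓝 l)) (hc : c < l) :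
    Tendsto (fun n : ℕ => a n - c * n) atTop atTop := by
  have : Tendsto (fun n : ℕ => (n : ℝ) * (a n / n - c)) atTop atTop :=
    Tendsto.atTop_mul_pos (sub_pos.2 hc) tendsto_natCast_atTop_atTop (ha.sub_const c)
  refine this.congr' ?_
  filter_upwards [eventually_ne_atTop 0] with n hn
  field_simp

lemma tendsto_div_natCast_of_abs_sub_le {u v : ℕ → ℝ} {l C : ℝ}
    (hu : Tendsto (fun n : ℕ => u n / n) atTop (𝓝 l)) (huv : ∀ n, |u n - v n| ≤ C) :
    Tendsto (fun n : ℕ => v n / n) atTop (𝓝 l) := by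
  refine hu.congr_dist <| squeeze_zero (fun _ => dist_nonneg) (fun n => ?_)
    (tendsto_const_div_atTop_nhds_zero_nat C)
  rw [Real.dist_eq, ← sub_div, abs_div, Nat.abs_cast]
  exact div_le_div_of_nonneg_right (huv n) (Nat.cast_nonneg n)

section Semicontraction

variable {X : Type*} [PseudoMetricSpace X] {f : X → X}

lemma dist_iterate_iterate_le (hf : LipschitzWith 1 f) (x : X) {k n : ℕ} (hkn : k ≤ n) :
    dist (f^[n] x) (f^[k] x) ≤ dist (f^[n - k] x) x := by
  have := (hf.iterate k).dist_le_mul (f^[n - k] x) x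
  rwa [one_pow, NNReal.coe_one, one_mul, ← Function.iterate_add_apply,
    Nat.add_sub_cancel' hkn] at this

lemma horofunctionMap_iterate_le_of_forall_le (hf : LipschitzWith 1 f) (x₀ : X) {c : ℝ}
    {n : ℕ} (hn : ∀ j ≤ n, dist x₀ (f^[j] x₀) - c * j ≤ dist x₀ (f^[n] x₀) - c * n)
    {k : ℕ} (hkn : k ≤ n) :
    horofunctionMap x₀ (f^[n] x₀) (f^[k] x₀) ≤ -c * k := by
  have hmax := hn (n - k) (Nat.sub_le n k)
  rw [Nat.cast_sub hkn] at hmax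
  have := dist_iterate_iterate_le hf x₀ hkn
  simp only [horofunctionMap]
  linarith [dist_comm x₀ (f^[n - k] x₀), dist_comm x₀ (f^[n] x₀)]

variable {x₀ : X} {l : ℝ}

lemma exists_horofunctionMap_iterate_le (hf : LipschitzWith 1 f)
    (hl : Tendsto (fun n : ℕ => dist x₀ (f^[n] x₀) / n) atTop (𝓝 l)) {c : ℝ} (hc : c < l)
    (m : ℕ) : ∃ n ≥ m, ∀ k ≤ n, horofunctionMap x₀ (f^[n] x₀) (f^[k] x₀) ≤ -c * k := by
  obtain ⟨n, hmn, hn⟩ := high_scores (tendsto_sub_mul_atTop_of_tendsto_div hl hc) m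
  refine ⟨n, hmn, fun k => horofunctionMap_iterate_le_of_forall_le hf x₀ fun j hj => ?_⟩
  rcases hj.lt_or_eq with hj | rfl
  exacts [(hn j hj).le, le_rfl]

lemma exists_mem_closure_range_horofunctionMap_iterate_le (hf : LipschitzWith 1 f)
    (hl : Tendsto (fun n : ℕ => dist x₀ (f^[n] x₀) / n) atTop (𝓝 l)) :
    ∃ h ∈ closure (range (horofunctionMap x₀)), ∀ k : ℕ, h (f^[k] x₀) ≤ -l * k := by
  set ε : ℕ → ℝ := fun m => 1 / ((m : ℝ) + 1)
  let A : ℕ → Set (X → ℝ) := fun m =>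
    closure (range (horofunctionMap x₀)) ∩ {g | ∀ k ≤ m, g (f^[k] x₀) ≤ -(l - ε m) * k}
  have hA_closed : ∀ m, IsClosed (A m) := fun m => by
    refine isClosed_closure.inter ?_
    simp only [ofPred_forall]
    exact isClosed_iInter fun k => isClosed_iInter fun _ =>
      isClosed_le (continuous_apply _) continuous_const
  have hA_succ : ∀ m, A (m + 1) ⊆ A m := fun m g ⟨hg, hgk⟩ => by
    refine ⟨hg, fun k hk => (hgk k (hk.trans m.le_succ)).trans ?_⟩
    have : ε (m + 1) ≤ ε m := by
      simp only [ε]; gcongr; linarith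
    gcongr
  have hA_nonempty : ∀ m, (A m).Nonempty := fun m => by
    obtain ⟨n, hmn, hn⟩ := exists_horofunctionMap_iterate_le hf hl
      (sub_lt_self l (by positivity : 0 < ε m)) m
    exact ⟨_, subset_closure (mem_range_self (f^[n] x₀)), fun k hk => hn k (hk.trans hmn)⟩
  obtain ⟨h, hh⟩ := IsCompact.nonempty_iInter_of_sequence_nonempty_isCompact_isClosed A
    hA_succ hA_nonempty ((isCompact_closure_range_horofunctionMap x₀).of_isClosed_subset
      (hA_closed 0) inter_subset_left) hA_closed
  have hA : ∀ m, h ∈ A m := mem_iInter.1 hh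
  refine ⟨h, (hA 0).1, fun k => ?_⟩
  have hlim : Tendsto (fun m : ℕ => -(l - ε m) * k) atTop (𝓝 (-l * k)) := by
    simpa [ε] using (tendsto_one_div_add_atTop_nhds_zero_nat.const_sub l).neg.mul_const (k : ℝ)
  exact ge_of_tendsto hlim ((eventually_ge_atTop k).mono fun m hm => (hA m).2 k hm)

lemma tendsto_neg_apply_iterate_div {h : X → ℝ} (hh : LipschitzWith 1 h) (h0 : h x₀ = 0)
    (hl : Tendsto (fun n : ℕ => dist x₀ (f^[n] x₀) / n) atTop (𝓝 l))
    (hdrift : ∀ k : ℕ, h (f^[k] x₀) ≤ -l * k) :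
    Tendsto (fun N : ℕ => -h (f^[N] x₀) / N) atTop (𝓝 l) := by
  refine tendsto_of_tendsto_of_tendsto_of_le_of_le' tendsto_const_nhds hl ?_ ?_ <;>
    filter_upwards [eventually_gt_atTop 0] with N hN
  · rw [le_div_iff₀ (Nat.cast_pos.2 hN)]
    linarith [hdrift N]
  · have := hh.le_add_mul x₀ (f^[N] x₀)
    rw [h0, NNReal.coe_one, one_mul] at this
    gcongr
    linarith

lemma tendsto_neg_apply_iterate_div_of_lipschitzWith (hf : LipschitzWith 1 f) {h : X → ℝ}
    (hh : LipschitzWith 1 h) (hx₀ : Tendsto (fun N : ℕ => -h (f^[N] x₀) / N) atTop (𝓝 l))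
    (x : X) : Tendsto (fun N : ℕ => -h (f^[N] x) / N) atTop (𝓝 l) := by
  refine tendsto_div_natCast_of_abs_sub_le (C := dist x₀ x) hx₀ fun N => ?_
  have := (hh.comp (hf.iterate N)).dist_le_mul x₀ x
  rw [one_pow, mul_one, NNReal.coe_one, one_mul, Real.dist_eq, ← abs_neg, neg_sub] at this
  rwa [neg_sub_neg]

end Semicontraction

theorem semicontraction_drift_horofunction_general
    {X : Type*} [MetricSpace X] (x₀ : X)
    (f : X → X) (hf : ∀ x y : X, dist (f x) (f y) ≤ dist x y)
    (l : ℝ)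
    (hl : Tendsto (fun n : ℕ => dist x₀ (f^[n] x₀) / (n : ℝ)) atTop (𝓝 l)) :
    ∃ h : X → ℝ,
      h ∈ closure {g : X → ℝ | ∃ x : X, g = fun y => dist x y - dist x x₀} ∧
      (∀ k : ℕ, h (f^[k] x₀) ≤ -l * k) ∧
      (∀ x : X,
        Tendsto (fun N : ℕ => -h (f^[N] x) / (N : ℝ)) atTop (𝓝 l)) := by
  have hf₁ : LipschitzWith 1 f := LipschitzWith.of_dist_le_mul fun x y => by simpa using hf x y
  have hrange : {g : X → ℝ | ∃ x : X, g = fun y => dist x y - dist x x₀} =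
      range (horofunctionMap x₀) := ext fun _ => exists_congr fun _ => eq_comm
  obtain ⟨h, hmem, hdrift⟩ := exists_mem_closure_range_horofunctionMap_iterate_le hf₁ hl
  obtain ⟨hh, h0⟩ := closure_range_horofunctionMap_subset x₀ hmem
  refine ⟨h, hrange ▸ hmem, hdrift, ?_⟩
  exact tendsto_neg_apply_iterate_div_of_lipschitzWith hf₁ hh
    (tendsto_neg_apply_iterate_div hh h0 hl hdrift)

/-- **Karlsson's lemma: the drift of a semicontraction is detected by a horofunction.**
Here the metric bordification is the closure, in `X → ℝ` with the product (pointwise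
convergence) topology, of the image of `Φ : x ↦ (y ↦ d(x,y) − d(x,x₀))`. -/
theorem semicontraction_drift_horofunction
    {X : Type*} [MetricSpace X] [ProperSpace X] (x₀ : X)
    (f : X → X) (hf : ∀ x y : X, dist (f x) (f y) ≤ dist x y)
    (l : ℝ)
    (hl : Tendsto (fun n : ℕ => dist x₀ (f^[n] x₀) / (n : ℝ)) atTop (𝓝 l)) :
    ∃ h : X → ℝ,
      h ∈ closure {g : X → ℝ | ∃ x : X, g = fun y => dist x y - dist x x₀} ∧
      (∀ k : ℕ, h (f^[k] x₀) ≤ -l * k) ∧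
      (∀ x : X,
        Tendsto (fun N : ℕ => -h (f^[N] x) / (N : ℝ)) atTop (𝓝 l)) :=
  semicontraction_drift_horofunction_general x₀ f hf l hl
end

section
/- Let (a_n)_{n≥1} be a subadditive sequence of real numbers, i.e., a_{n+m} ≤ a_n + a_m for all n, m ≥ 1, and suppose lim_{N→∞} a_N / N = l ∈ ℝ. Then there exists a strictly increasing sequence (m_j) of positive integers such that for every subsequence (n_i) of (m_j) and every integer k ≥ 0, liminf_{i→∞} (a_{n_i − k} − a_{n_i}) ≤ −l·k. -/
open Filter Topology

/-- For a subadditive sequence with `a_N/N → l`, there is a subsequence `(m_j)` such that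
along any further subsequence `(n_i)` and for every `k ≥ 0`,
`liminf_i (a_{n_i − k} − a_{n_i}) ≤ −l·k`.  (Convention: `a 0 = 0`.) -/
theorem subadditive_record_subsequence
    (a : ℕ → ℝ) (ha0 : a 0 = 0)
    (hsub : ∀ n m : ℕ, 1 ≤ n → 1 ≤ m → a (n + m) ≤ a n + a m)
    (l : ℝ) (hl : Tendsto (fun N : ℕ => a N / (N : ℝ)) atTop (𝓝 l)) :
    ∃ m : ℕ → ℕ, StrictMono m ∧ (∀ j, 1 ≤ m j) ∧
      ∀ φ : ℕ → ℕ, StrictMono φ →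
        ∀ k : ℕ,
          Filter.liminf (fun i : ℕ => a (m (φ i) - k) - a (m (φ i))) atTop ≤ -l * k := by
  classical
  -- subadditivity for all indices, using `a 0 = 0`
  have hsub' : ∀ n m : ℕ, a (n + m) ≤ a n + a m := by
    intro n m
    rcases Nat.eq_zero_or_pos n with hn | hn
    · simp [hn, ha0]
    rcases Nat.eq_zero_or_pos m with hm | hm
    · simp [hm, ha0]
    exact hsub n m hn hm
  -- Fekete-type lower bound: `l * N ≤ a N` for all `N`.
  have hmulA : ∀ N k : ℕ, a (k * N) ≤ k * a N := by
    intro N k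
    induction k with
    | zero => simp [ha0]
    | succ k ih =>
      have h1 : (k+1) * N = k * N + N := by ring
      rw [h1]
      calc a (k * N + N) ≤ a (k * N) + a N := hsub' _ _
        _ ≤ k * a N + a N := by linarith
        _ = (k + 1 : ℕ) * a N := by push_cast; ring
  have hlow : ∀ N : ℕ, l * N ≤ a N := by
    intro N
    rcases Nat.eq_zero_or_pos N with hN | hN
    · simp [hN, ha0]
    have hNR : (0:ℝ) < N := by exact_mod_cast hN
    have htend : Tendsto (fun k : ℕ => a (k * N) / ((k * N : ℕ) : ℝ)) atTop (𝓝 l) := by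
      apply hl.comp
      apply tendsto_atTop_atTop.2
      exact fun c => ⟨c, fun k hk => le_trans hk (Nat.le_mul_of_pos_right k hN)⟩
    have hle : l ≤ a N / N := by
      apply le_of_tendsto htend
      filter_upwards [eventually_ge_atTop 1] with k hk
      have hkR : (0:ℝ) < k := by exact_mod_cast hk
      have h2 : a (k * N) / ((k * N : ℕ) : ℝ) ≤ (k * a N) / ((k:ℝ) * N) := by
        rw [Nat.cast_mul]
        exact div_le_div_of_nonneg_right (hmulA N k) (by positivity) |>.trans_eq rfl
      rw [mul_div_mul_left _ _ (ne_of_gt hkR)] at h2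
      exact h2
    calc l * N ≤ (a N / N) * N := by nlinarith
      _ = a N := by field_simp
  -- the centred sequence
  set b : ℕ → ℝ := fun n => a n - l * n with hbdef
  have hbnn : ∀ n, 0 ≤ b n := fun n => sub_nonneg.2 (hlow n)
  have hkey : ∀ n k : ℕ, k ≤ n → a (n - k) - a n = b (n - k) - b n - l * k := by
    intro n k hk
    have hc : ((n - k : ℕ) : ℝ) = (n:ℝ) - k := by
      push_cast [Nat.cast_sub hk]; ring
    simp only [hbdef]
    rw [hc]; ring
  -- uniform lower bound used for coboundedness
  have hlbF : ∀ k n : ℕ, k + 1 ≤ n → -a k ≤ a (n - k) - a n := by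
    intro k n h
    have hk : k ≤ n := le_trans (Nat.le_succ k) h
    have h2 : a n ≤ a (n - k) + a k := by
      have h3 : n - k + k = n := Nat.sub_add_cancel hk
      calc a n = a (n - k + k) := by rw [h3]
        _ ≤ a (n - k) + a k := hsub' _ _
    linarith
  -- the set of record indices of b
  by_cases hR : {n : ℕ | ∀ m ≤ n, b m ≤ b n}.Infinite
  · -- Case 1: infinitely many records
    have hex : ∀ N : ℕ, ∃ n, N < n ∧ ∀ m ≤ n, b m ≤ b n := by
      intro N
      obtain ⟨n, hn, hn'⟩ := hR.exists_gt N
      exact ⟨n, hn', hn⟩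
    choose g hg1 hg2 using hex
    set m : ℕ → ℕ := fun j => Nat.rec (g 0) (fun _ p => g p) j with hmdef
    have hstep : ∀ j, m (j+1) = g (m j) := fun j => rfl
    have hm0 : m 0 = g 0 := rfl
    have hmono : StrictMono m := by
      apply strictMono_nat_of_lt_succ
      intro j
      rw [hstep]
      exact hg1 (m j)
    have hmem : ∀ j, ∀ m' ≤ m j, b m' ≤ b (m j) := by
      intro j
      cases j with
      | zero => rw [hm0]; exact hg2 0
      | succ j => rw [hstep]; exact hg2 (m j)
    have hpos : ∀ j, 1 ≤ m j := by
      intro j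
      cases j with
      | zero => rw [hm0]; exact hg1 0
      | succ j =>
        rw [hstep]
        exact le_trans (Nat.succ_le_succ (Nat.zero_le _)) (hg1 (m j))
    refine ⟨m, hmono, hpos, ?_⟩
    intro φ hφ k
    have hni : ∀ i : ℕ, i ≤ m (φ i) := fun i => le_trans hφ.le_apply hmono.le_apply
    apply liminf_le_of_frequently_le
    · apply (Filter.eventually_atTop.2 ?_).frequently
      refine ⟨k + 1, fun i hi => ?_⟩
      have hk : k ≤ m (φ i) := le_trans (Nat.le_succ k) (le_trans hi (hni i))
      rw [hkey (m (φ i)) k hk]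
      have := hmem (φ i) (m (φ i) - k) (Nat.sub_le _ _)
      linarith
    · apply isBoundedUnder_of_eventually_ge (a := -a k)
      filter_upwards [eventually_ge_atTop (k+1)] with i hi
      exact hlbF k (m (φ i)) (le_trans hi (hni i))
  · -- Case 2: finitely many records; then b is bounded, use the limsup
    have hRfin : {n : ℕ | ∀ m ≤ n, b m ≤ b n}.Finite := Set.not_infinite.1 hR
    obtain ⟨N0, hN0⟩ := hRfin.bddAbove
    have hN0' : ∀ n : ℕ, (∀ m ≤ n, b m ≤ b n) → n ≤ N0 := fun n hn => hN0 hn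
    set B : ℝ := (Finset.range (N0+1)).sup' (by simp) b with hBdef
    have hB : ∀ n, b n ≤ B := by
      intro n
      induction n using Nat.strong_induction_on with
      | _ n ih =>
        by_cases hn : ∀ m ≤ n, b m ≤ b n
        · exact Finset.le_sup' b (Finset.mem_range.2 (Nat.lt_succ_of_le (hN0' n hn)))
        · push_neg at hn
          obtain ⟨m', hm'le, hm'⟩ := hn
          have hne : m' ≠ n := by
            intro h; rw [h] at hm'; exact lt_irrefl _ hm'
          exact le_trans (le_of_lt hm') (ih m' (lt_of_le_of_ne hm'le hne))
    have hBU : IsBoundedUnder (· ≤ ·) (atTop : Filter ℕ) b := isBoundedUnder_of ⟨B, hB⟩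
    have hBL : IsBoundedUnder (· ≥ ·) (atTop : Filter ℕ) b := isBoundedUnder_of ⟨0, hbnn⟩
    set S : ℝ := Filter.limsup b atTop with hSdef
    have H : ∀ N j : ℕ, ∃ n, N < n ∧ S - 1/(j+1) < b n ∧ b n < S + 1/(j+1) := by
      intro N j
      have hε : (0:ℝ) < 1/((j:ℝ)+1) := by positivity
      have h1 : ∃ᶠ n in atTop, S - 1/((j:ℝ)+1) < b n :=
        frequently_lt_of_lt_limsup hBL.isCoboundedUnder_le (by rw [← hSdef]; linarith)
      have h2 : ∀ᶠ n in atTop, b n < S + 1/((j:ℝ)+1) :=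
        eventually_lt_of_limsup_lt (by rw [← hSdef]; linarith) hBU
      obtain ⟨n, hn1, hn2, hn3⟩ := (h1.and_eventually (h2.and (eventually_gt_atTop N))).exists
      exact ⟨n, hn3, hn1, hn2⟩
    choose g hglt hgl hgu using H
    set m : ℕ → ℕ := fun j => Nat.rec (g 0 0) (fun i p => g p (i+1)) j with hmdef
    have hstep : ∀ j, m (j+1) = g (m j) (j+1) := fun j => rfl
    have hm0 : m 0 = g 0 0 := rfl
    have hmono : StrictMono m := by
      apply strictMono_nat_of_lt_succ
      intro j
      rw [hstep]
      exact hglt (m j) (j+1)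
    have hl' : ∀ j : ℕ, S - 1/((j:ℝ)+1) < b (m j) := by
      intro j
      cases j with
      | zero => rw [hm0]; exact hgl 0 0
      | succ j => rw [hstep]; push_cast; exact_mod_cast hgl (m j) (j+1)
    have hu' : ∀ j : ℕ, b (m j) < S + 1/((j:ℝ)+1) := by
      intro j
      cases j with
      | zero => rw [hm0]; exact hgu 0 0
      | succ j => rw [hstep]; exact_mod_cast hgu (m j) (j+1)
    have hpos : ∀ j, 1 ≤ m j := by
      intro j
      cases j with
      | zero => rw [hm0]; exact hglt 0 0
      | succ j =>
        rw [hstep]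
        exact le_trans (Nat.succ_le_succ (Nat.zero_le _)) (hglt (m j) (j+1))
    refine ⟨m, hmono, hpos, ?_⟩
    intro φ hφ k
    have hni : ∀ i : ℕ, i ≤ m (φ i) := fun i => le_trans hφ.le_apply hmono.le_apply
    have hcb : IsBoundedUnder (· ≥ ·) (atTop : Filter ℕ)
        (fun i : ℕ => a (m (φ i) - k) - a (m (φ i))) := by
      apply isBoundedUnder_of_eventually_ge (a := -a k)
      filter_upwards [eventually_ge_atTop (k+1)] with i hi
      exact hlbF k (m (φ i)) (le_trans hi (hni i))
    have key : ∀ ε : ℝ, 0 < ε →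
        Filter.liminf (fun i : ℕ => a (m (φ i) - k) - a (m (φ i))) atTop ≤ -l * k + ε := by
      intro ε hε
      obtain ⟨i0, hi0⟩ := exists_nat_gt (2/ε)
      obtain ⟨N1, hN1⟩ := Filter.eventually_atTop.1
        (eventually_lt_of_limsup_lt (show Filter.limsup b atTop < S + ε/2 by
          rw [← hSdef]; linarith) hBU)
      apply liminf_le_of_frequently_le _ hcb
      apply (Filter.eventually_atTop.2 ?_).frequently
      refine ⟨max i0 (N1 + k + 1), fun i hi => ?_⟩
      have hii0 : i0 ≤ i := le_trans (le_max_left _ _) hi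
      have hiN : N1 + k + 1 ≤ i := le_trans (le_max_right _ _) hi
      have hk : k ≤ m (φ i) := by
        have : k ≤ i := by omega
        exact le_trans this (hni i)
      rw [hkey (m (φ i)) k hk]
      -- upper bound on b (m (φ i) - k)
      have h1 : b (m (φ i) - k) < S + ε/2 := by
        apply hN1
        have := hni i
        omega
      -- lower bound on b (m (φ i))
      have h2 : S - ε/2 < b (m (φ i)) := by
        have h3 := hl' (φ i)
        have h4 : 1/((φ i : ℝ)+1) ≤ 1/((i:ℝ)+1) := by
          apply one_div_le_one_div_of_le (by positivity)
          have : (i:ℝ) ≤ (φ i : ℝ) := by exact_mod_cast hφ.le_apply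
          linarith
        have h5 : 1/((i:ℝ)+1) < ε/2 := by
          rw [div_lt_iff₀ (by positivity)]
          rw [div_lt_iff₀ hε] at hi0
          have h6 : (i0:ℝ) ≤ (i:ℝ) := by exact_mod_cast hii0
          nlinarith
        linarith
      clear_value b S B m
      have h6 : b (m (φ i) - k) - b (m (φ i)) < ε := by linarith
      linarith [h6]
    -- conclude by letting ε → 0
    have := fun ε hε => key ε hε
    by_contra hcon
    push_neg at hcon
    set L := Filter.liminf (fun i : ℕ => a (m (φ i) - k) - a (m (φ i))) atTop
    have hε : 0 < (L - (-l * k)) / 2 := by linarith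
    have := key _ hε
    linarith
end

section
/- Let (Ω, μ) be a probability space, T : Ω → Ω an ergodic measure-preserving transformation, 0 < p < 1, and f : Ω → ℝ a measurable function with ∫_Ω |f|^p dμ < ∞. Then for μ-a.e. ω ∈ Ω, lim_{N→∞} N^{−1/p} ( f(ω) + f(Tω) + ⋯ + f(T^{N−1}ω) ) = 0. -/
/-!
Split `f` at height `M`: `|f| ≤ M + h_M` with `h_M = |f| · 1{|f| > M}`. The bounded part
contributes at most `N M = o(N^{1/p})` because `p < 1`. For the tail, subadditivity of `t ↦ t^p`
gives `∑ h_M(Tⁱω) ≤ (∑ h_M(Tⁱω)^p)^{1/p}`, and the ergodic theorem applied to the integrable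
function `h_M^p` makes the inner sum at most `(∫ h_M^p + o(1)) N`; as `∫ h_M^p → 0` when
`M → ∞`, the tail contributes at most `ε N^{1/p}`.

Only the upper bound of Birkhoff's theorem for nonnegative `g` is needed. The set where
`limsup S_N g / N > c` is forward invariant, hence null or conull, and by the maximal ergodic
theorem it cannot be conull when `c > ∫ g`.
-/

open MeasureTheory Filter Topology

section MaximalErgodic

variable {α : Type*} {T : α → α} {g : α → ℝ}

noncomputable def maxBirkhoffSum (T : α → α) (g : α → ℝ) (N : ℕ) : α → ℝ :=
  (Finset.range (N + 1)).sup' Finset.nonempty_range_add_one fun n => birkhoffSum T g n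

lemma maxBirkhoffSum_apply (N : ℕ) (x : α) :
    maxBirkhoffSum T g N x =
      (Finset.range (N + 1)).sup' Finset.nonempty_range_add_one fun n => birkhoffSum T g n x :=
  Finset.sup'_apply _ _ x

lemma birkhoffSum_le_maxBirkhoffSum {n N : ℕ} (h : n ≤ N) (x : α) :
    birkhoffSum T g n x ≤ maxBirkhoffSum T g N x := by
  rw [maxBirkhoffSum_apply]
  exact Finset.le_sup' (fun n => birkhoffSum T g n x) (Finset.mem_range_succ_iff.2 h)

lemma maxBirkhoffSum_nonneg (N : ℕ) (x : α) : 0 ≤ maxBirkhoffSum T g N x :=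
  birkhoffSum_le_maxBirkhoffSum (Nat.zero_le N) x

lemma maxBirkhoffSum_pos_iff {N : ℕ} {x : α} :
    0 < maxBirkhoffSum T g N x ↔ ∃ n ≤ N, 0 < birkhoffSum T g n x := by
  simp [maxBirkhoffSum_apply, Finset.lt_sup'_iff]

lemma maxBirkhoffSum_le_add_comp {N : ℕ} {x : α} (h : 0 < maxBirkhoffSum T g N x) :
    maxBirkhoffSum T g N x ≤ g x + maxBirkhoffSum T g N (T x) := by
  obtain ⟨n, hn, hmax⟩ := Finset.exists_mem_eq_sup' Finset.nonempty_range_add_one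
    fun n => birkhoffSum T g n x
  rw [← maxBirkhoffSum_apply] at hmax
  rcases n with _ | m
  · exact absurd (hmax ▸ h) (lt_irrefl 0)
  · rw [hmax, birkhoffSum_succ']
    gcongr
    exact birkhoffSum_le_maxBirkhoffSum (by grind) _

variable [MeasurableSpace α] {μ : Measure α}

lemma measurable_birkhoffSum (hT : Measurable T) (hg : Measurable g) (n : ℕ) :
    Measurable (birkhoffSum T g n) :=
  Finset.measurable_sum _ fun k _ => hg.comp (hT.iterate k)

lemma measurable_maxBirkhoffSum (hT : Measurable T) (hg : Measurable g) (N : ℕ) :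
    Measurable (maxBirkhoffSum T g N) :=
  Finset.measurable_sup' _ fun n _ => measurable_birkhoffSum hT hg n

namespace MeasureTheory.MeasurePreserving

lemma integrable_birkhoffSum (hT : MeasurePreserving T μ μ)
    (hg : Integrable g μ) (n : ℕ) : Integrable (birkhoffSum T g n) μ := by
  unfold birkhoffSum
  exact integrable_finsetSum _ fun k _ => (hT.iterate k).integrable_comp_of_integrable hg

lemma integrable_maxBirkhoffSum (hT : MeasurePreserving T μ μ)
    (hg : Integrable g μ) (N : ℕ) : Integrable (maxBirkhoffSum T g N) μ :=
  Finset.sup'_induction _ _ (p := fun φ => Integrable φ μ) (fun _ h₁ _ h₂ => h₁.sup h₂)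
    fun n _ => hT.integrable_birkhoffSum hg n

/-- Garsia's argument: with `ψ = maxBirkhoffSum T g N`, one has `ψ - ψ ∘ T ≤ g` on `{0 < ψ}`,
while `∫ ψ ∘ T = ∫ ψ` and `ψ` vanishes off this set. -/
lemma setIntegral_maxBirkhoffSum_pos_nonneg (hT : MeasurePreserving T μ μ)
    (hgm : Measurable g) (hg : Integrable g μ) (N : ℕ) :
    0 ≤ ∫ x in {x | 0 < maxBirkhoffSum T g N x}, g x ∂μ := by
  set ψ := maxBirkhoffSum T g N
  set E := {x | 0 < ψ x}
  have hψm : Measurable ψ := measurable_maxBirkhoffSum hT.measurable hgm N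
  have hψ : Integrable ψ μ := hT.integrable_maxBirkhoffSum hg N
  have hψT : Integrable (ψ ∘ T) μ := hT.integrable_comp_of_integrable hψ
  have hE : MeasurableSet E := measurableSet_lt measurable_const hψm
  have hψE : ∫ x in E, ψ x ∂μ = ∫ x, ψ x ∂μ :=
    setIntegral_eq_integral_of_forall_compl_eq_zero fun x hx =>
      (maxBirkhoffSum_nonneg N x).antisymm' (not_lt.1 hx)
  have hψTE : ∫ x in E, ψ (T x) ∂μ ≤ ∫ x, ψ (T x) ∂μ :=
    setIntegral_le_integral hψT (.of_forall fun x => maxBirkhoffSum_nonneg N (T x))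
  have hψT_eq : ∫ x, ψ (T x) ∂μ = ∫ x, ψ x ∂μ := by
    rw [← integral_map hT.measurable.aemeasurable hψm.aestronglyMeasurable, hT.map_eq]
  calc (0 : ℝ) ≤ ∫ x in E, ψ x ∂μ - ∫ x in E, ψ (T x) ∂μ := by linarith
    _ = ∫ x in E, (ψ x - ψ (T x)) ∂μ := (integral_sub hψ.integrableOn hψT.integrableOn).symm
    _ ≤ ∫ x in E, g x ∂μ :=
        setIntegral_mono_on (hψ.sub hψT).integrableOn hg.integrableOn hE
          fun x hx => by linarith [maxBirkhoffSum_le_add_comp hx]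

theorem setIntegral_exists_birkhoffSum_pos_nonneg
    (hT : MeasurePreserving T μ μ) (hgm : Measurable g) (hg : Integrable g μ) :
    0 ≤ ∫ x in {x | ∃ n, 0 < birkhoffSum T g n x}, g x ∂μ := by
  have hunion :
      {x | ∃ n, 0 < birkhoffSum T g n x} = ⋃ N, {x | 0 < maxBirkhoffSum T g N x} := by
    ext x
    simp only [Set.mem_ofPred_eq, Set.mem_iUnion, maxBirkhoffSum_pos_iff]
    exact ⟨fun ⟨n, hn⟩ => ⟨n, n, le_rfl, hn⟩, fun ⟨_, n, _, hn⟩ => ⟨n, hn⟩⟩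
  have hmono : Monotone fun N => {x | 0 < maxBirkhoffSum T g N x} := fun _ _ hN x hx => by
    obtain ⟨n, hn, hpos⟩ := maxBirkhoffSum_pos_iff.1 hx
    exact maxBirkhoffSum_pos_iff.2 ⟨n, hn.trans hN, hpos⟩
  rw [hunion]
  refine ge_of_tendsto (tendsto_setIntegral_of_monotone (fun N => ?_) hmono hg.integrableOn)
    (.of_forall (hT.setIntegral_maxBirkhoffSum_pos_nonneg hgm hg))
  exact measurableSet_lt measurable_const (measurable_maxBirkhoffSum hT.measurable hgm N)

theorem le_integral_of_ae_exists_birkhoffSum_gt [IsProbabilityMeasure μ]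
    (hT : MeasurePreserving T μ μ) (hgm : Measurable g) (hg : Integrable g μ) {c : ℝ}
    (h : ∀ᵐ x ∂μ, ∃ n : ℕ, c * n < birkhoffSum T g n x) : c ≤ ∫ x, g x ∂μ := by
  have hsum : ∀ n x, birkhoffSum T (g - fun _ => c) n x = birkhoffSum T g n x - c * n := by
    intro n x
    simp [birkhoffSum, mul_comm]
  have hfull : μ.restrict {x | ∃ n, 0 < birkhoffSum T (g - fun _ => c) n x} = μ :=
    Measure.restrict_eq_self_of_ae_mem <| h.mono fun x ⟨n, hn⟩ => ⟨n, by rw [hsum]; linarith⟩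
  have := hT.setIntegral_exists_birkhoffSum_pos_nonneg (hgm.sub measurable_const)
    (hg.sub (integrable_const c))
  rw [hfull, Pi.sub_def, integral_sub hg (integrable_const c)] at this
  simpa [sub_nonneg] using this

end MeasureTheory.MeasurePreserving

end MaximalErgodic

namespace LinearGrowth

lemma exists_mul_lt_of_lt_linearGrowthSup {u : ℕ → ℝ} {c : ℝ}
    (h : (c : EReal) < linearGrowthSup fun n => (u n : EReal)) : ∃ n : ℕ, c * n < u n := by
  obtain ⟨b, hcb, hb⟩ := EReal.lt_iff_exists_real_btwn.1 h
  obtain ⟨n, hn, hn1⟩ := ((frequently_mul_le hb).and_eventually (eventually_ge_atTop 1)).exists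
  refine ⟨n, lt_of_lt_of_le ?_ (by exact_mod_cast hn : b * n ≤ u n)⟩
  exact mul_lt_mul_of_pos_right (EReal.coe_lt_coe_iff.1 hcb) (by exact_mod_cast hn1)

lemma eventually_le_mul_of_linearGrowthSup_lt {u : ℕ → ℝ} {c : ℝ}
    (h : (linearGrowthSup fun n => (u n : EReal)) < c) : ∀ᶠ n : ℕ in atTop, u n ≤ c * n :=
  (eventually_le_mul h).mono fun n hn => by exact_mod_cast hn

end LinearGrowth

open LinearGrowth

section PointwiseErgodic

variable {α : Type*} {T : α → α} {g : α → ℝ}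

noncomputable def upperBirkhoffAverage (T : α → α) (g : α → ℝ) (x : α) : EReal :=
  linearGrowthSup fun n => ((birkhoffSum T g n x : ℝ) : EReal)

lemma upperBirkhoffAverage_le_comp (hg : 0 ≤ g) (x : α) :
    upperBirkhoffAverage T g x ≤ upperBirkhoffAverage T g (T x) := by
  refine linearGrowthSup_le_of_eventually_le (b := g x) (EReal.coe_ne_top _)
    (.of_forall fun n => ?_)
  have : birkhoffSum T g n x ≤ birkhoffSum T g n (T x) + g x := by
    rcases n with _ | n
    · simpa using hg x
    · rw [birkhoffSum_succ', birkhoffSum_succ]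
      linarith [show 0 ≤ g (T^[n] (T x)) from hg _]
  exact_mod_cast this

variable [MeasurableSpace α] {μ : Measure α}

lemma measurable_upperBirkhoffAverage (hT : Measurable T) (hg : Measurable g) :
    Measurable (upperBirkhoffAverage T g) :=
  Measurable.limsup fun n =>
    (EReal.monotone_div_right_of_nonneg (by positivity)).measurable.comp
      (measurable_birkhoffSum hT hg n).coe_real_ereal

theorem Ergodic.ae_upperBirkhoffAverage_le [IsProbabilityMeasure μ] (hT : Ergodic T μ)
    (hgm : Measurable g) (hg : Integrable g μ) (hg0 : 0 ≤ g) :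
    ∀ᵐ x ∂μ, upperBirkhoffAverage T g x ≤ ∫ y, g y ∂μ := by
  suffices h : ∀ c : ℚ, ∫ y, g y ∂μ < c → ∀ᵐ x ∂μ, upperBirkhoffAverage T g x ≤ (c : ℝ) by
    filter_upwards [ae_all_iff.2 fun c => eventually_imp_distrib_left.2 (h c)] with x hx
    by_contra! hlt
    obtain ⟨c, hgc, hcL⟩ := EReal.lt_iff_exists_rat_btwn.1 hlt
    exact (hx c (by exact_mod_cast hgc)).not_gt hcL
  intro c hc
  set B := {x | ((c : ℝ) : EReal) < upperBirkhoffAverage T g x}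
  have hBm : MeasurableSet B :=
    measurableSet_lt measurable_const (measurable_upperBirkhoffAverage hT.measurable hgm)
  have hBT : B ⊆ T ⁻¹' B := fun x hx => hx.trans_le (upperBirkhoffAverage_le_comp hg0 x)
  rcases hT.ae_empty_or_univ_of_ae_le_preimage hBm.nullMeasurableSet hBT.eventuallyLE with h | h
  · filter_upwards [measure_eq_zero_iff_ae_notMem.1 (ae_eq_empty.1 h)] with x hx
    exact not_lt.1 hx
  · have hB : ∀ᵐ x ∂μ, x ∈ B := ae_eq_univ.1 h
    have := hT.toMeasurePreserving.le_integral_of_ae_exists_birkhoffSum_gt hgm hg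
      (hB.mono fun x hx => exists_mul_lt_of_lt_linearGrowthSup hx)
    exact absurd hc this.not_gt

end PointwiseErgodic

lemma Real.rpow_sum_le_sum_rpow {ι : Type*} {p : ℝ} (hp0 : 0 < p) (hp1 : p ≤ 1) (s : Finset ι)
    {u : ι → ℝ} (hu : ∀ i ∈ s, 0 ≤ u i) : (∑ i ∈ s, u i) ^ p ≤ ∑ i ∈ s, u i ^ p := by
  classical
  induction s using Finset.induction_on with
  | empty => simp [Real.zero_rpow hp0.ne']
  | insert a s ha ih =>
    rw [Finset.sum_insert ha, Finset.sum_insert ha]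
    have hu' : ∀ i ∈ s, 0 ≤ u i := fun i hi => hu i (Finset.mem_insert_of_mem hi)
    calc (u a + ∑ i ∈ s, u i) ^ p ≤ u a ^ p + (∑ i ∈ s, u i) ^ p :=
          Real.rpow_add_le_add_rpow (hu a (Finset.mem_insert_self a s))
            (Finset.sum_nonneg hu') hp0.le hp1
      _ ≤ u a ^ p + ∑ i ∈ s, u i ^ p := by gcongr; exact ih hu'

section Tail

noncomputable def absTail (M x : ℝ) : ℝ := if M < |x| then |x| else 0

lemma absTail_nonneg (M x : ℝ) : 0 ≤ absTail M x := by
  unfold absTail; split_ifs <;> positivity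

lemma abs_le_add_absTail {M : ℝ} (hM : 0 ≤ M) (x : ℝ) : |x| ≤ M + absTail M x := by
  unfold absTail; split_ifs with h
  · linarith
  · linarith [not_lt.1 h]

lemma measurable_absTail (M : ℝ) : Measurable (absTail M) :=
  Measurable.ite (measurableSet_lt measurable_const continuous_abs.measurable)
    continuous_abs.measurable measurable_const

lemma norm_absTail_rpow_le {p : ℝ} (hp : 0 < p) (M x : ℝ) : ‖absTail M x ^ p‖ ≤ |x| ^ p := by
  rw [Real.norm_of_nonneg (Real.rpow_nonneg (absTail_nonneg M x) p)]
  unfold absTail; split_ifs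
  · rfl
  · rw [Real.zero_rpow hp.ne']; positivity

lemma absTail_eq_zero {M x : ℝ} (h : |x| ≤ M) : absTail M x = 0 := if_neg h.not_gt

lemma abs_sum_le_card_mul_add_sum_absTail {ι : Type*} {M : ℝ} (hM : 0 ≤ M) (s : Finset ι)
    (a : ι → ℝ) : |∑ i ∈ s, a i| ≤ s.card * M + ∑ i ∈ s, absTail M (a i) :=
  calc |∑ i ∈ s, a i| ≤ ∑ i ∈ s, |a i| := Finset.abs_sum_le_sum_abs _ _
    _ ≤ ∑ i ∈ s, (M + absTail M (a i)) := Finset.sum_le_sum fun i _ => abs_le_add_absTail hM _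
    _ = s.card * M + ∑ i ∈ s, absTail M (a i) := by
      rw [Finset.sum_add_distrib, Finset.sum_const, nsmul_eq_mul]

lemma norm_sum_div_rpow_le {p M δ : ℝ} (hp0 : 0 < p) (hp1 : p ≤ 1) (hM : 0 ≤ M) (hδ : 0 ≤ δ)
    {N : ℕ} (hN : 0 < N) (a : ℕ → ℝ)
    (h : ∑ i ∈ Finset.range N, absTail M (a i) ^ p ≤ δ ^ p * N) :
    ‖(∑ i ∈ Finset.range N, a i) / (N : ℝ) ^ (1 / p)‖ ≤ M * (N : ℝ) ^ (1 - 1 / p) + δ := by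
  have hN' : (0 : ℝ) < N := by exact_mod_cast hN
  have hNp : (0 : ℝ) < (N : ℝ) ^ (1 / p) := by positivity
  set t := ∑ i ∈ Finset.range N, absTail M (a i)
  have ht : t ≤ δ * (N : ℝ) ^ (1 / p) := by
    have ht0 : 0 ≤ t := Finset.sum_nonneg fun i _ => absTail_nonneg M _
    refine (Real.rpow_le_rpow_iff ht0 (by positivity) hp0).1 ?_
    calc t ^ p ≤ ∑ i ∈ Finset.range N, absTail M (a i) ^ p :=
          Real.rpow_sum_le_sum_rpow hp0 hp1 _ fun i _ => absTail_nonneg M _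
      _ ≤ δ ^ p * N := h
      _ = (δ * (N : ℝ) ^ (1 / p)) ^ p := by
          rw [Real.mul_rpow hδ hNp.le, ← Real.rpow_mul hN'.le, one_div_mul_cancel hp0.ne',
            Real.rpow_one]
  have hsum := abs_sum_le_card_mul_add_sum_absTail hM (Finset.range N) a
  rw [Finset.card_range] at hsum
  rw [Real.norm_eq_abs, abs_div, abs_of_pos hNp, div_le_iff₀ hNp, add_mul, mul_assoc,
    ← Real.rpow_add hN', sub_add_cancel, Real.rpow_one]
  linarith

section Integral

variable {Ω : Type*} [MeasurableSpace Ω] {μ : Measure Ω} {p : ℝ} {f : Ω → ℝ}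

lemma integrable_absTail_rpow (hp : 0 < p) (hf : Measurable f)
    (hint : Integrable (fun ω => |f ω| ^ p) μ) (M : ℝ) :
    Integrable (fun ω => absTail M (f ω) ^ p) μ :=
  hint.mono' (((measurable_absTail M).comp hf).pow_const p).aestronglyMeasurable
    (.of_forall fun ω => norm_absTail_rpow_le hp M (f ω))

lemma tendsto_integral_absTail_rpow (hp : 0 < p) (hf : Measurable f)
    (hint : Integrable (fun ω => |f ω| ^ p) μ) :
    Tendsto (fun M : ℕ => ∫ ω, absTail M (f ω) ^ p ∂μ) atTop (𝓝 0) := by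
  have h := tendsto_integral_of_dominated_convergence (fun ω => |f ω| ^ p)
    (F := fun (M : ℕ) ω => absTail M (f ω) ^ p) (f := 0)
    (fun M => (integrable_absTail_rpow hp hf hint M).aestronglyMeasurable) hint
    (fun M => .of_forall fun ω => norm_absTail_rpow_le hp M (f ω))
    (.of_forall fun ω => tendsto_const_nhds.congr' <| by
      filter_upwards [eventually_ge_atTop ⌈|f ω|⌉₊] with M hM
      rw [absTail_eq_zero (Nat.ceil_le.1 hM), Real.zero_rpow hp.ne', Pi.zero_apply])
  simpa using h

end Integral

end Tail

lemma tendsto_natCast_rpow_one_sub_one_div {p : ℝ} (hp0 : 0 < p) (hp1 : p < 1) :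
    Tendsto (fun N : ℕ => (N : ℝ) ^ (1 - 1 / p)) atTop (𝓝 0) := by
  have hexp : 0 < 1 / p - 1 := by rw [sub_pos, lt_one_div one_pos hp0, div_one]; exact hp1
  simpa [Function.comp_def] using
    (tendsto_rpow_neg_atTop hexp).comp tendsto_natCast_atTop_atTop

/-- **Marcinkiewicz–Zygmund strong law:** if `f ∈ L^p` with `0 < p < 1`, the Birkhoff sums
are `o(N^{1/p})` almost everywhere. -/
theorem marcinkiewicz_zygmund_strong_law
    {Ω : Type*} [MeasurableSpace Ω] {μ : Measure Ω} [IsProbabilityMeasure μ]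
    {T : Ω → Ω} (hT : Ergodic T μ)
    (p : ℝ) (hp0 : 0 < p) (hp1 : p < 1)
    (f : Ω → ℝ) (hf : Measurable f)
    (hint : Integrable (fun ω => |f ω| ^ p) μ) :
    ∀ᵐ ω ∂μ,
      Tendsto
        (fun N : ℕ => (∑ i ∈ Finset.range N, f (T^[i] ω)) / (N : ℝ) ^ (1 / p))
        atTop (𝓝 0) := by
  have htail (M : ℕ) : ∀ᵐ ω ∂μ, upperBirkhoffAverage T (fun ω => absTail M (f ω) ^ p) ω ≤
      ∫ ω, absTail M (f ω) ^ p ∂μ :=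
    hT.ae_upperBirkhoffAverage_le (((measurable_absTail M).comp hf).pow_const p)
      (integrable_absTail_rpow hp0 hf hint M)
      fun ω => Real.rpow_nonneg (absTail_nonneg M _) p
  filter_upwards [ae_all_iff.2 htail] with ω hω
  rw [NormedAddGroup.tendsto_nhds_zero]
  intro ε hε
  obtain ⟨M, hM⟩ := ((tendsto_integral_absTail_rpow hp0 hf hint).eventually_lt_const
    (by positivity : 0 < (ε / 2) ^ p)).exists
  have hsum := eventually_le_mul_of_linearGrowthSup_lt ((hω M).trans_lt (by exact_mod_cast hM))
  have hsmall := ((tendsto_natCast_rpow_one_sub_one_div hp0 hp1).const_mul (M : ℝ))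
    |>.eventually_lt_const (show (M : ℝ) * 0 < ε / 2 by simpa using hε)
  filter_upwards [hsum, hsmall, eventually_gt_atTop 0] with N hN hMN hN0
  calc _ ≤ M * (N : ℝ) ^ (1 - 1 / p) + ε / 2 :=
        norm_sum_div_rpow_le hp0 hp1.le M.cast_nonneg (half_pos hε).le hN0 _ hN
    _ < ε := by linarith
end

section
/- Let (X, d) be a complete CAT(0) metric space and let T : X → X be a semicontraction, i.e., d(Tx, Ty) ≤ d(x, y) for all x, y ∈ X. Then there exists A ≥ 0 (namely A = lim_{n→∞} (1/n) d(x, Tⁿx), which exists by subadditivity and is independent of x) such that for every starting point x₀ ∈ X there is a geodesic ray γ : [0, ∞) → X with γ(0) = x₀ and lim_{n→∞} (1/n) d( Tⁿ x₀, γ(A · n) ) = 0. -/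
/-!
Write `b n = dist x₀ (T^[n] x₀)`. Subadditivity gives `A = lim b n / n = inf b n / n`, and
`|b n - dist x (T^[n] x)| ≤ 2 dist x x₀` makes `A` independent of `x₀`. If `A > 0`, then for
every `ε > 0` the record times of `b n - (A - ε) n` are arbitrarily large "good" times `n`, at
which `dist (T^[k] x₀) (T^[n] x₀) ≤ b n - (A - ε) k` for all `k ≤ n`: the triangle
`x₀, T^[k] x₀, T^[n] x₀` is nearly degenerate. In a CAT(0) space the comparison inequality along
a geodesic and the convexity of the distance between geodesics turn this into: the unit-speed
geodesic from `x₀` to `T^[n] x₀` stays within `t · o(1)` of the one to `T^[k] x₀` on `[0, b k]`.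
So the geodesics to the good times converge to a geodesic ray `γ`, and
`dist (T^[k] x₀) (γ (A k)) ≤ b k - A k + A k · o(1)`.

Geodesics are built by iterated bisection and completeness; the comparison and convexity
inequalities hold at dyadic parameters by induction and everywhere by continuity.
-/

open Filter Topology Set

theorem floor_mul_two_pow_le {t : ℝ} (ht : t ≤ 1) (n : ℕ) : ⌊t * 2 ^ n⌋₊ ≤ 2 ^ n :=
  Nat.floor_le_of_le (by push_cast; exact mul_le_of_le_one_left (by positivity) ht)

theorem tendsto_floor_mul_two_pow_div {t : ℝ} (ht : 0 ≤ t) :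
    Tendsto (fun n : ℕ => (⌊t * 2 ^ n⌋₊ : ℝ) / 2 ^ n) atTop (𝓝 t) :=
  (tendsto_nat_floor_mul_div_atTop ht).comp (tendsto_pow_atTop_atTop_of_one_lt one_lt_two)

theorem natCast_div_two_pow_mem_Icc {k n : ℕ} (hk : k ≤ 2 ^ n) :
    (k : ℝ) / 2 ^ n ∈ Icc (0 : ℝ) 1 :=
  unitInterval.div_mem (by positivity) (by positivity) (by exact_mod_cast hk)

theorem forall_mem_Icc_of_dyadic {P : ℝ → Prop} (hP : IsClosed {t ∈ Icc (0 : ℝ) 1 | P t})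
    (h0 : P 0) (h1 : P 1)
    (hmid : ∀ a ∈ Icc (0 : ℝ) 1, ∀ b ∈ Icc (0 : ℝ) 1, P a → P b → P ((a + b) / 2)) :
    ∀ t ∈ Icc (0 : ℝ) 1, P t := by
  have hdyadic : ∀ n k : ℕ, k ≤ 2 ^ n → P (k / 2 ^ n) := by
    intro n
    induction n with
    | zero => intro k hk; interval_cases k <;> simpa
    | succ n ih =>
      intro k hk
      have h2n : 2 ^ (n + 1) = 2 * 2 ^ n := pow_succ' 2 n
      obtain ⟨j, rfl | rfl⟩ := Nat.even_or_odd' k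
      · convert ih j (by omega) using 1
        push_cast; ring
      · convert hmid _ (natCast_div_two_pow_mem_Icc (k := j) (by omega)) _
          (natCast_div_two_pow_mem_Icc (k := j + 1) (by omega))
          (ih j (by omega)) (ih (j + 1) (by omega)) using 1
        push_cast; ring
  intro t ht
  refine (hP.mem_of_tendsto (tendsto_floor_mul_two_pow_div ht.1)
    (Eventually.of_forall fun n => ?_)).2
  exact ⟨natCast_div_two_pow_mem_Icc (floor_mul_two_pow_le ht.2 n),
    hdyadic n _ (floor_mul_two_pow_le ht.2 n)⟩

/-- `dyadicChain m x y n k` is the point with parameter `k / 2 ^ n` on the path from `x` to `y`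
obtained by `n` rounds of bisection with `m`. -/
def dyadicChain {X : Type*} (m : X → X → X) (x y : X) : ℕ → ℕ → X
  | 0, k => if k = 0 then x else y
  | n + 1, k =>
    if k % 2 = 0 then dyadicChain m x y n (k / 2)
    else m (dyadicChain m x y n (k / 2)) (dyadicChain m x y n (k / 2 + 1))

section dyadicChain

variable {X : Type*} {m : X → X → X} {x y : X}

theorem dyadicChain_succ_two_mul (n k : ℕ) :
    dyadicChain m x y (n + 1) (2 * k) = dyadicChain m x y n k := by
  simp [dyadicChain]

theorem dyadicChain_succ_two_mul_add_one (n k : ℕ) :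
    dyadicChain m x y (n + 1) (2 * k + 1) =
      m (dyadicChain m x y n k) (dyadicChain m x y n (k + 1)) := by
  simp [dyadicChain, Nat.add_mod, Nat.add_div]

theorem dyadicChain_add_two_pow_mul (n j k : ℕ) :
    dyadicChain m x y (n + j) (2 ^ j * k) = dyadicChain m x y n k := by
  induction j with
  | zero => simp
  | succ j ih => rw [← add_assoc, pow_succ', mul_assoc, dyadicChain_succ_two_mul, ih]

theorem dyadicChain_zero_right (n : ℕ) : dyadicChain m x y n 0 = x := by
  simpa [dyadicChain] using dyadicChain_add_two_pow_mul (m := m) (x := x) (y := y) 0 n 0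

theorem dyadicChain_two_pow (n : ℕ) : dyadicChain m x y n (2 ^ n) = y := by
  simpa [dyadicChain] using dyadicChain_add_two_pow_mul (m := m) (x := x) (y := y) 0 n 1

end dyadicChain

section Metric

variable {X : Type*} [MetricSpace X] {m : X → X → X} {T : X → X}

def IsCAT0Midpoint (m : X → X → X) : Prop :=
  ∀ y z x : X, dist x (m y z) ^ 2 ≤ (dist x y ^ 2 + dist x z ^ 2) / 2 - dist y z ^ 2 / 4

namespace IsCAT0Midpoint

theorem dist_left_right (hm : IsCAT0Midpoint m) (y z : X) :
    dist y (m y z) = dist y z / 2 ∧ dist z (m y z) = dist y z / 2 := by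
  have hy := hm y z y
  have hz := hm y z z
  simp only [dist_self, dist_comm z y] at hy hz
  have hyz : 0 ≤ dist y z := dist_nonneg
  have hy' : dist y (m y z) ≤ dist y z / 2 := by nlinarith [dist_nonneg (x := y) (y := m y z)]
  have hz' : dist z (m y z) ≤ dist y z / 2 := by nlinarith [dist_nonneg (x := z) (y := m y z)]
  have htri : dist y z ≤ dist y (m y z) + dist z (m y z) := dist_triangle_right _ _ _
  constructor <;> linarith

theorem eq_of_dist_eq (hm : IsCAT0Midpoint m) {y z w : X} (hy : dist w y = dist y z / 2)
    (hz : dist w z = dist y z / 2) : w = m y z := by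
  have h := hm y z w
  rw [hy, hz] at h
  exact dist_eq_zero.1 <| pow_eq_zero_iff two_ne_zero |>.1 <|
    le_antisymm (by linarith) (by positivity)

theorem comm (hm : IsCAT0Midpoint m) (y z : X) : m y z = m z y := by
  obtain ⟨hy, hz⟩ := hm.dist_left_right z y
  rw [dist_comm z y] at hy hz
  exact (hm.eq_of_dist_eq (by rwa [dist_comm]) (by rwa [dist_comm])).symm

theorem dist_midpoint_midpoint_left_le (hm : IsCAT0Midpoint m) (x y z : X) :
    dist (m x y) (m x z) ≤ dist y z / 2 := by
  have h := hm x z (m x y)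
  have hyz := hm x y z
  rw [dist_comm (m x y) x, (hm.dist_left_right x y).1] at h
  rw [dist_comm z (m x y), dist_comm z x, dist_comm z y] at hyz
  exact abs_le_of_sq_le_sq' (by nlinarith) (by positivity) |>.2

theorem dist_midpoint_midpoint_le (hm : IsCAT0Midpoint m) (a b c d : X) :
    dist (m a b) (m c d) ≤ (dist a c + dist b d) / 2 := by
  have h₁ := hm.dist_midpoint_midpoint_left_le a b d
  have h₂ := hm.dist_midpoint_midpoint_left_le d a c
  rw [hm.comm d a, hm.comm d c] at h₂
  linarith [dist_triangle (m a b) (m a d) (m c d)]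

end IsCAT0Midpoint

theorem dist_eq_of_dist_succ_eq {f : ℕ → X} {N : ℕ} {c : ℝ}
    (hstep : ∀ i < N, dist (f i) (f (i + 1)) = c) (htotal : dist (f 0) (f N) = N * c) ⦃k l : ℕ⦄
    (hkl : k ≤ l) (hl : l ≤ N) : dist (f k) (f l) = (l - k) * c := by
  have hup : ∀ i j, i ≤ j → j ≤ N → dist (f i) (f j) ≤ (j - i) * c := fun i j hij hj =>
    calc dist (f i) (f j) ≤ ∑ a ∈ Finset.Ico i j, dist (f a) (f (a + 1)) :=
          dist_le_Ico_sum_dist f hij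
      _ = (j - i) * c := by
        rw [Finset.sum_congr rfl fun a ha => hstep a (by simp at ha; omega), Finset.sum_const,
          Nat.card_Ico, nsmul_eq_mul, Nat.cast_sub hij]
  have h0k := hup 0 k k.zero_le (hkl.trans hl)
  have hlN := hup l N hl le_rfl
  have := dist_triangle4 (f 0) (f k) (f l) (f N)
  push_cast at h0k
  exact le_antisymm (hup k l hkl hl) (by linarith)

section dyadicChain

variable {x y : X}

theorem dist_dyadicChain_succ (hm : IsCAT0Midpoint m) (n : ℕ) :
    ∀ k < 2 ^ n, dist (dyadicChain m x y n k) (dyadicChain m x y n (k + 1)) = dist x y / 2 ^ n := by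
  induction n with
  | zero =>
    intro k hk
    obtain rfl : k = 0 := by omega
    simp [dyadicChain]
  | succ n ih =>
    intro k hk
    have h2n : 2 ^ (n + 1) = 2 * 2 ^ n := pow_succ' 2 n
    obtain ⟨j, rfl | rfl⟩ := Nat.even_or_odd' k
    · rw [dyadicChain_succ_two_mul, dyadicChain_succ_two_mul_add_one,
        (hm.dist_left_right _ _).1, ih j (by omega), pow_succ]
      ring
    · rw [show 2 * j + 1 + 1 = 2 * (j + 1) by ring, dyadicChain_succ_two_mul,
        dyadicChain_succ_two_mul_add_one, dist_comm, (hm.dist_left_right _ _).2, ih j (by omega),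
        pow_succ]
      ring

theorem dist_dyadicChain (hm : IsCAT0Midpoint m) {n k l : ℕ} (hk : k ≤ 2 ^ n) (hl : l ≤ 2 ^ n) :
    dist (dyadicChain m x y n k) (dyadicChain m x y n l) = |(k : ℝ) - l| * (dist x y / 2 ^ n) := by
  have hchain := dist_eq_of_dist_succ_eq (f := dyadicChain m x y n) (dist_dyadicChain_succ hm n)
    (by rw [dyadicChain_zero_right, dyadicChain_two_pow]; push_cast; field_simp)
  rcases le_total k l with hkl | hlk
  · rw [hchain hkl hl, abs_of_nonpos (by simpa using hkl), neg_sub]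
  · rw [dist_comm, hchain hlk hk, abs_of_nonneg (by simpa using hlk)]

theorem dist_dyadicChain_dyadicChain (hm : IsCAT0Midpoint m) {n n' k k' : ℕ} (hk : k ≤ 2 ^ n)
    (hk' : k' ≤ 2 ^ n') :
    dist (dyadicChain m x y n k) (dyadicChain m x y n' k') =
      |(k : ℝ) / 2 ^ n - k' / 2 ^ n'| * dist x y := by
  wlog hnn : n ≤ n' generalizing n n' k k'
  · rw [dist_comm, this hk' hk (by omega), abs_sub_comm]
  obtain ⟨j, rfl⟩ := Nat.exists_eq_add_of_le hnn
  have hjk : 2 ^ j * k ≤ 2 ^ (n + j) := by rw [pow_add, mul_comm (2 ^ n)]; gcongr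
  rw [← dyadicChain_add_two_pow_mul n j k, dist_dyadicChain hm hjk hk', pow_add]
  push_cast
  rw [show (2 : ℝ) ^ j * k - k' = (2 ^ n * 2 ^ j) * ((k : ℝ) / 2 ^ n - k' / (2 ^ n * 2 ^ j)) by
    field_simp, abs_mul, abs_of_pos (by positivity)]
  field_simp

end dyadicChain

structure IsGeodesicSegment (g : ℝ → X) (x y : X) : Prop where
  apply_zero : g 0 = x
  apply_one : g 1 = y
  dist_eq : ∀ a ∈ Icc (0 : ℝ) 1, ∀ b ∈ Icc (0 : ℝ) 1, dist (g a) (g b) = |a - b| * dist x y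

namespace IsGeodesicSegment

variable {g h : ℝ → X} {x y z x' y' : X}

theorem lipschitzOnWith (hg : IsGeodesicSegment g x y) :
    LipschitzOnWith (nndist x y) g (Icc 0 1) :=
  .of_dist_le_mul fun a ha b hb => by rw [hg.dist_eq a ha b hb, coe_nndist, Real.dist_eq, mul_comm]

theorem continuousOn (hg : IsGeodesicSegment g x y) : ContinuousOn g (Icc 0 1) :=
  hg.lipschitzOnWith.continuousOn

theorem dist_apply_zero (hg : IsGeodesicSegment g x y) {l : ℝ} (hl : l ∈ Icc (0 : ℝ) 1) :
    dist x (g l) = l * dist x y := by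
  have h := hg.dist_eq 0 ⟨le_rfl, zero_le_one⟩ l hl
  rwa [hg.apply_zero, zero_sub, abs_neg, abs_of_nonneg hl.1] at h

theorem dist_div_eq (hg : IsGeodesicSegment g x y) (hxy : 0 < dist x y) {s t : ℝ}
    (hs : s ∈ Icc 0 (dist x y)) (ht : t ∈ Icc 0 (dist x y)) :
    dist (g (s / dist x y)) (g (t / dist x y)) = |s - t| := by
  rw [hg.dist_eq _ (unitInterval.div_mem hs.1 hxy.le hs.2) _
    (unitInterval.div_mem ht.1 hxy.le ht.2), ← sub_div, abs_div, abs_of_pos hxy,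
    div_mul_cancel₀ _ hxy.ne']

theorem comp_mul (hg : IsGeodesicSegment g x y) {l : ℝ} (hl : l ∈ Icc (0 : ℝ) 1) :
    IsGeodesicSegment (fun a => g (a * l)) x (g l) where
  apply_zero := by simp [hg.apply_zero]
  apply_one := by simp
  dist_eq a ha b hb := by
    have hmem : ∀ c ∈ Icc (0 : ℝ) 1, c * l ∈ Icc (0 : ℝ) 1 :=
      fun c hc => ⟨mul_nonneg hc.1 hl.1, mul_le_one₀ hc.2 hl.1 hl.2⟩
    rw [hg.dist_eq _ (hmem a ha) _ (hmem b hb), hg.dist_apply_zero hl, ← sub_mul, abs_mul,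
      abs_of_nonneg hl.1, mul_assoc]

theorem midpoint_eq (hm : IsCAT0Midpoint m) (hg : IsGeodesicSegment g x y) {a b : ℝ}
    (ha : a ∈ Icc (0 : ℝ) 1) (hb : b ∈ Icc (0 : ℝ) 1) : g ((a + b) / 2) = m (g a) (g b) := by
  have hab : (a + b) / 2 ∈ Icc (0 : ℝ) 1 := ⟨by linarith [ha.1, hb.1], by linarith [ha.2, hb.2]⟩
  apply hm.eq_of_dist_eq
  · rw [hg.dist_eq _ hab _ ha, hg.dist_eq a ha b hb,
      show (a + b) / 2 - a = -((a - b) / 2) by ring, abs_neg, abs_div, abs_two]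
    ring
  · rw [hg.dist_eq _ hab _ hb, hg.dist_eq a ha b hb,
      show (a + b) / 2 - b = (a - b) / 2 by ring, abs_div, abs_two]
    ring

theorem dist_sq_le (hm : IsCAT0Midpoint m) (hg : IsGeodesicSegment g x y) (p : X) {l : ℝ}
    (hl : l ∈ Icc (0 : ℝ) 1) :
    dist p (g l) ^ 2 ≤ (1 - l) * dist p x ^ 2 + l * dist p y ^ 2 - l * (1 - l) * dist x y ^ 2 := by
  refine forall_mem_Icc_of_dyadic (P := fun l => dist p (g l) ^ 2 ≤
    (1 - l) * dist p x ^ 2 + l * dist p y ^ 2 - l * (1 - l) * dist x y ^ 2) ?_ ?_ ?_ ?_ l hl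
  · have := hg.continuousOn
    exact isClosed_Icc.isClosed_le (by fun_prop) (by fun_prop)
  · simp [hg.apply_zero]
  · simp [hg.apply_one]
  · intro a ha b hb hPa hPb
    have h := hm (g a) (g b) p
    rw [← hg.midpoint_eq hm ha hb, hg.dist_eq a ha b hb, mul_pow, sq_abs] at h
    linarith

theorem dist_le (hm : IsCAT0Midpoint m) (hg : IsGeodesicSegment g x y)
    (hh : IsGeodesicSegment h x' y') {l : ℝ} (hl : l ∈ Icc (0 : ℝ) 1) :
    dist (g l) (h l) ≤ (1 - l) * dist x x' + l * dist y y' := by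
  refine forall_mem_Icc_of_dyadic
    (P := fun l => dist (g l) (h l) ≤ (1 - l) * dist x x' + l * dist y y') ?_ ?_ ?_ ?_ l hl
  · have := hg.continuousOn
    have := hh.continuousOn
    exact isClosed_Icc.isClosed_le (by fun_prop) (by fun_prop)
  · simp [hg.apply_zero, hh.apply_zero]
  · simp [hg.apply_one, hh.apply_one]
  · intro a ha b hb hPa hPb
    rw [hg.midpoint_eq hm ha hb, hh.midpoint_eq hm ha hb]
    linarith [hm.dist_midpoint_midpoint_le (g a) (g b) (h a) (h b)]

theorem dist_sq_le_excess (hm : IsCAT0Midpoint m) (hh : IsGeodesicSegment h x z)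
    (hxz : 0 < dist x z) (hyz : dist x y ≤ dist x z) :
    dist y (h (dist x y / dist x z)) ^ 2 ≤
      2 * dist x y * (dist x y + dist y z - dist x z) + (dist x y + dist y z - dist x z) ^ 2 := by
  set r := dist x y
  set s := dist x z
  set D := r + dist y z - s
  set l := r / s
  have hl : l ∈ Icc (0 : ℝ) 1 := unitInterval.div_mem dist_nonneg hxz.le hyz
  have hls : l * s = r := div_mul_cancel₀ _ hxz.ne'
  have hD : 0 ≤ D := by linarith [dist_triangle x y z]
  have hyz' : dist y z = s - r + D := by ring
  have hcn := hh.dist_sq_le hm y hl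
  rw [dist_comm y x, hyz'] at hcn
  calc dist y (h l) ^ 2 ≤ (1 - l) * r ^ 2 + l * (s - r + D) ^ 2 - l * (1 - l) * s ^ 2 := hcn
    _ = 2 * r * D - 2 * (l * r) * D + l * D ^ 2 := by
      linear_combination (l * s - r + 2 * D) * hls
    _ ≤ 2 * r * D + D ^ 2 := by
      nlinarith [mul_nonneg (mul_nonneg hl.1 (dist_nonneg : 0 ≤ r)) hD,
        mul_le_mul_of_nonneg_right hl.2 (sq_nonneg D)]

theorem dist_le_mul_sqrt_of_excess_le (hm : IsCAT0Midpoint m) (hg : IsGeodesicSegment g x y)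
    (hh : IsGeodesicSegment h x z) (hxy : 0 < dist x y) (hyz : dist x y ≤ dist x z) {W : ℝ}
    (hW : (dist x y + dist y z - dist x z) / dist x y ≤ W) {t : ℝ} (ht : t ∈ Icc 0 (dist x y)) :
    dist (g (t / dist x y)) (h (t / dist x z)) ≤ t * √(2 * W + W ^ 2) := by
  set r := dist x y
  set s := dist x z
  set D := r + dist y z - s
  have hs : 0 < s := hxy.trans_le hyz
  have hDr : 0 ≤ D / r := div_nonneg (by linarith [dist_triangle x y z]) hxy.le
  have hWpos : 0 ≤ 2 * W + W ^ 2 := by nlinarith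
  have hend : dist y (h (r / s)) ≤ r * √(2 * W + W ^ 2) := by
    refine (pow_le_pow_iff_left₀ dist_nonneg (by positivity) two_ne_zero).1 ?_
    calc dist y (h (r / s)) ^ 2 ≤ 2 * r * D + D ^ 2 := hh.dist_sq_le_excess hm hs hyz
      _ = r ^ 2 * (2 * (D / r) + (D / r) ^ 2) := by field_simp
      _ ≤ r ^ 2 * (2 * W + W ^ 2) := by gcongr
      _ = (r * √(2 * W + W ^ 2)) ^ 2 := by rw [mul_pow, Real.sq_sqrt hWpos]
  have hconv := hg.dist_le hm (hh.comp_mul (unitInterval.div_mem hxy.le hs.le hyz))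
    (unitInterval.div_mem ht.1 hxy.le ht.2)
  rw [dist_self, mul_zero, zero_add, div_mul_div_cancel₀ hxy.ne'] at hconv
  calc dist (g (t / r)) (h (t / s)) ≤ t / r * dist y (h (r / s)) := hconv
    _ ≤ t / r * (r * √(2 * W + W ^ 2)) := by gcongr; exact div_nonneg ht.1 hxy.le
    _ = t * √(2 * W + W ^ 2) := by field_simp

end IsGeodesicSegment

theorem exists_isGeodesicSegment (hm : IsCAT0Midpoint m) [CompleteSpace X] (x y : X) :
    ∃ g, IsGeodesicSegment g x y := by
  have : Nonempty X := ⟨x⟩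
  set u : ℝ → ℕ → X := fun t n => dyadicChain m x y n ⌊t * 2 ^ n⌋₊
  have hdist : ∀ a ∈ Icc (0 : ℝ) 1, ∀ b ∈ Icc (0 : ℝ) 1, ∀ n n' : ℕ, dist (u a n) (u b n') =
      |(⌊a * 2 ^ n⌋₊ : ℝ) / 2 ^ n - ⌊b * 2 ^ n'⌋₊ / 2 ^ n'| * dist x y := fun a ha b hb n n' =>
    dist_dyadicChain_dyadicChain hm (floor_mul_two_pow_le ha.2 n) (floor_mul_two_pow_le hb.2 n')
  have hlim : ∀ t ∈ Icc (0 : ℝ) 1, Tendsto (u t) atTop (𝓝 (limUnder atTop (u t))) := by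
    intro t ht
    apply CauchySeq.tendsto_limUnder
    have := (tendsto_floor_mul_two_pow_div ht.1).cauchySeq
    rw [cauchySeq_iff_tendsto_dist_atTop_0] at this ⊢
    simpa [hdist t ht t ht, Real.dist_eq] using this.mul_const (dist x y)
  refine ⟨fun t => limUnder atTop (u t), ?_, ?_, fun a ha b hb => ?_⟩
  · refine tendsto_nhds_unique (hlim 0 ⟨le_rfl, zero_le_one⟩) (tendsto_const_nhds.congr fun n => ?_)
    simp [u, dyadicChain_zero_right]
  · refine tendsto_nhds_unique (hlim 1 ⟨zero_le_one, le_rfl⟩) (tendsto_const_nhds.congr fun n => ?_)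
    have h2n : ⌊(2 : ℝ) ^ n⌋₊ = 2 ^ n := by exact_mod_cast Nat.floor_natCast (R := ℝ) (2 ^ n)
    simp [u, h2n, dyadicChain_two_pow]
  · refine tendsto_nhds_unique ((hlim a ha).dist (hlim b hb)) ?_
    simpa [hdist a ha b hb] using ((tendsto_floor_mul_two_pow_div ha.1).sub
      (tendsto_floor_mul_two_pow_div hb.1)).abs.mul_const (dist x y)

namespace LipschitzWith

theorem dist_iterate_le (hT : LipschitzWith 1 T) (n : ℕ) (x y : X) :
    dist (T^[n] x) (T^[n] y) ≤ dist x y := by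
  simpa using (hT.iterate n).dist_le_mul x y

theorem dist_iterate_iterate_le (hT : LipschitzWith 1 T) {k n : ℕ} (hkn : k ≤ n) (x : X) :
    dist (T^[k] x) (T^[n] x) ≤ dist x (T^[n - k] x) := by
  obtain ⟨j, rfl⟩ := Nat.exists_eq_add_of_le hkn
  rw [Nat.add_sub_cancel_left, Function.iterate_add_apply]
  exact hT.dist_iterate_le k x _

theorem subadditive_dist_iterate (hT : LipschitzWith 1 T) (x : X) :
    Subadditive fun n => dist x (T^[n] x) := fun p q =>
  calc dist x (T^[p + q] x) ≤ dist x (T^[p] x) + dist (T^[p] x) (T^[p + q] x) := dist_triangle _ _ _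
    _ ≤ dist x (T^[p] x) + dist x (T^[q] x) := by
      grw [hT.dist_iterate_iterate_le (Nat.le_add_right p q), Nat.add_sub_cancel_left]

theorem abs_dist_iterate_sub_le (hT : LipschitzWith 1 T) (x y : X) (n : ℕ) :
    |dist x (T^[n] x) - dist y (T^[n] y)| ≤ 2 * dist x y := by
  have := hT.dist_iterate_le n x y
  rw [abs_sub_le_iff]
  constructor <;> linarith [dist_triangle4 x y (T^[n] y) (T^[n] x),
    dist_triangle4 y x (T^[n] x) (T^[n] y), dist_comm x y, dist_comm (T^[n] x) (T^[n] y)]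

theorem exists_tendsto_dist_iterate_div [Nonempty X] (hT : LipschitzWith 1 T) :
    ∃ A : ℝ, 0 ≤ A ∧ (∀ x : X, Tendsto (fun n : ℕ => dist x (T^[n] x) / n) atTop (𝓝 A)) ∧
      ∀ (x : X) (n : ℕ), A * n ≤ dist x (T^[n] x) := by
  have hbdd (x : X) : BddBelow (range fun n : ℕ => dist x (T^[n] x) / n) :=
    ⟨0, by rintro _ ⟨n, rfl⟩; positivity⟩
  have hlim (x : X) := (hT.subadditive_dist_iterate x).tendsto_lim (hbdd x)
  have hsame (x y : X) :
      (hT.subadditive_dist_iterate x).lim = (hT.subadditive_dist_iterate y).lim := by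
    have hdiff : Tendsto (fun n : ℕ => (dist x (T^[n] x) - dist y (T^[n] y)) / n) atTop (𝓝 0) :=
      squeeze_zero_norm (fun n => by
          rw [Real.norm_eq_abs, abs_div, Nat.abs_cast]
          gcongr
          exact hT.abs_dist_iterate_sub_le x y n)
        (tendsto_const_div_atTop_nhds_zero_nat (2 * dist x y))
    refine tendsto_nhds_unique (hlim x) ?_
    simpa [sub_div] using (hlim y).add hdiff
  obtain ⟨x₁⟩ := ‹Nonempty X›
  refine ⟨(hT.subadditive_dist_iterate x₁).lim, ge_of_tendsto' (hlim x₁) fun n => by positivity,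
    fun x => hsame x x₁ ▸ hlim x, fun x n => ?_⟩
  rcases n.eq_zero_or_pos with rfl | hn
  · simp
  · rw [← hsame x x₁, ← le_div_iff₀ (by positivity)]
    exact (hT.subadditive_dist_iterate x).lim_le_div (hbdd x) hn.ne'

end LipschitzWith

theorem frequently_forall_add_mul_le {b : ℕ → ℝ} {c : ℝ}
    (hb : Tendsto (fun n => b n - c * n) atTop atTop) :
    ∃ᶠ n in atTop, ∀ k ≤ n, b (n - k) + c * k ≤ b n := by
  refine (frequently_high_scores hb).mono fun n hn k hk => ?_
  rcases k.eq_zero_or_pos with rfl | hk0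
  · simp
  · have := hn (n - k) (by omega)
    rw [Nat.cast_sub hk] at this
    linarith

theorem exists_tendsto_atTop_forall_add_mul_le {b : ℕ → ℝ} {A : ℝ} (hb : ∀ n : ℕ, A * n ≤ b n) :
    ∃ ns : ℕ → ℕ, Tendsto ns atTop atTop ∧
      ∀ ε > 0, ∀ᶠ j in atTop, ∀ k ≤ ns j, b (ns j - k) + (A - ε) * k ≤ b (ns j) := by
  have hgood (j : ℕ) : ∃ n ≥ j, ∀ k ≤ n, b (n - k) + (A - 1 / (j + 1)) * k ≤ b n := by
    refine frequently_atTop.1 (frequently_forall_add_mul_le (tendsto_atTop_mono (fun n => ?_)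
      (tendsto_natCast_atTop_atTop.const_mul_atTop (by positivity : (0 : ℝ) < 1 / (j + 1))))) j
    linarith [hb n]
  choose ns hns_ge hns using hgood
  refine ⟨ns, tendsto_atTop_mono hns_ge tendsto_id, fun ε hε => ?_⟩
  filter_upwards [tendsto_one_div_add_atTop_nhds_zero_nat.eventually (gt_mem_nhds hε)]
    with j hj k hk
  nlinarith [hns j k hk, (k.cast_nonneg : (0 : ℝ) ≤ k)]

theorem cauchySeq_of_forall_exists_eventually_dist_lt {u : ℕ → X}
    (h : ∀ δ > 0, ∃ z, ∀ᶠ j in atTop, dist z (u j) < δ) : CauchySeq u := by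
  refine Metric.cauchySeq_iff'.2 fun δ hδ => ?_
  obtain ⟨z, hz⟩ := h (δ / 2) (half_pos hδ)
  obtain ⟨N, hN⟩ := eventually_atTop.1 hz
  exact ⟨N, fun n hn => by linarith [dist_triangle_left (u n) (u N) z, hN n hn, hN N le_rfl]⟩

theorem exists_geodesicRay_of_eventually_dist_le [CompleteSpace X] {x₀ : X} {σ : ℕ → ℝ → X}
    {L F : ℕ → ℝ} {ns : ℕ → ℕ} (hσ0 : ∀ n, σ n 0 = x₀)
    (hσ : ∀ᶠ n in atTop, ∀ s ∈ Icc 0 (L n), ∀ t ∈ Icc 0 (L n), dist (σ n s) (σ n t) = |s - t|)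
    (hL : Tendsto L atTop atTop) (hF : Tendsto F atTop (𝓝 0)) (hns : Tendsto ns atTop atTop)
    (hclose : ∀ᶠ k in atTop, ∀ t ∈ Icc 0 (L k),
      ∀ᶠ j in atTop, dist (σ k t) (σ (ns j) t) ≤ t * F k) :
    ∃ γ : ℝ → X, γ 0 = x₀ ∧ (∀ s t : ℝ, 0 ≤ s → 0 ≤ t → dist (γ s) (γ t) = |s - t|) ∧
      ∀ᶠ k in atTop, ∀ t ∈ Icc 0 (L k), dist (σ k t) (γ t) ≤ t * F k := by
  have : Nonempty X := ⟨x₀⟩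
  have hcauchy (t : ℝ) (ht : 0 ≤ t) : CauchySeq fun j => σ (ns j) t := by
    refine cauchySeq_of_forall_exists_eventually_dist_lt fun δ hδ => ?_
    have hsmall : Tendsto (fun k => t * F k) atTop (𝓝 0) := by simpa using hF.const_mul t
    obtain ⟨k, hkL, hkF, hk⟩ := ((hL.eventually_ge_atTop t).and
      ((hsmall.eventually (gt_mem_nhds hδ)).and hclose)).exists
    exact ⟨σ k t, (hk t ⟨ht, hkL⟩).mono fun j hj => hj.trans_lt hkF⟩
  have hγ (t : ℝ) (ht : 0 ≤ t) :
      Tendsto (fun j => σ (ns j) t) atTop (𝓝 (limUnder atTop fun j => σ (ns j) t)) :=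
    (hcauchy t ht).tendsto_limUnder
  refine ⟨fun t => limUnder atTop fun j => σ (ns j) t, ?_, fun s t hs ht => ?_, ?_⟩
  · exact tendsto_nhds_unique (hγ 0 le_rfl) (by simp [hσ0])
  · refine tendsto_nhds_unique ((hγ s hs).dist (hγ t ht)) (tendsto_const_nhds.congr' ?_)
    filter_upwards [hns.eventually hσ, (hL.comp hns).eventually_ge_atTop (max s t)] with j hj hjL
    exact (hj s ⟨hs, (le_max_left s t).trans hjL⟩ t ⟨ht, (le_max_right s t).trans hjL⟩).symm
  · filter_upwards [hclose] with k hk t ht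
    exact le_of_tendsto (tendsto_const_nhds.dist (hγ t ht.1)) (hk t ht)

theorem eventually_dist_geodesicSegment_orbit_le (hm : IsCAT0Midpoint m) (hT : LipschitzWith 1 T)
    {x₀ : X} {g : ℕ → ℝ → X} (hg : ∀ n, IsGeodesicSegment (g n) x₀ (T^[n] x₀))
    (hbtop : Tendsto (fun n => dist x₀ (T^[n] x₀)) atTop atTop) {ns : ℕ → ℕ}
    (hns : Tendsto ns atTop atTop) {c : ℝ}
    (hgood : ∀ᶠ j in atTop, ∀ k ≤ ns j, dist x₀ (T^[ns j - k] x₀) + c * k ≤ dist x₀ (T^[ns j] x₀))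
    {k : ℕ} (hk : 0 < dist x₀ (T^[k] x₀)) {t : ℝ} (ht : t ∈ Icc 0 (dist x₀ (T^[k] x₀))) :
    ∀ᶠ j in atTop, dist (g k (t / dist x₀ (T^[k] x₀))) (g (ns j) (t / dist x₀ (T^[ns j] x₀))) ≤
      t * √(2 * (1 - c * k / dist x₀ (T^[k] x₀)) + (1 - c * k / dist x₀ (T^[k] x₀)) ^ 2) := by
  filter_upwards [hgood, hns.eventually_ge_atTop k,
    (hbtop.comp hns).eventually_ge_atTop (dist x₀ (T^[k] x₀))] with j hgoodj hkj hbj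
  refine (hg k).dist_le_mul_sqrt_of_excess_le hm (hg (ns j)) hk hbj ?_ ht
  rw [div_le_iff₀ hk, sub_mul, one_mul, div_mul_cancel₀ _ hk.ne']
  linarith [hT.dist_iterate_iterate_le hkj x₀, hgoodj k hkj]

theorem exists_geodesicRay_tracking_orbit [CompleteSpace X] (hm : IsCAT0Midpoint m)
    (hT : LipschitzWith 1 T) (x₀ : X) {A : ℝ} (hA : 0 < A)
    (hlim : Tendsto (fun n : ℕ => dist x₀ (T^[n] x₀) / n) atTop (𝓝 A))
    (hle : ∀ n : ℕ, A * n ≤ dist x₀ (T^[n] x₀)) :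
    ∃ γ : ℝ → X, γ 0 = x₀ ∧ (∀ s t : ℝ, 0 ≤ s → 0 ≤ t → dist (γ s) (γ t) = |s - t|) ∧
      Tendsto (fun n : ℕ => dist (T^[n] x₀) (γ (A * n)) / n) atTop (𝓝 0) := by
  set b : ℕ → ℝ := fun n => dist x₀ (T^[n] x₀)
  choose g hg using fun n => exists_isGeodesicSegment hm x₀ (T^[n] x₀)
  obtain ⟨ns, hns, hgood⟩ := exists_tendsto_atTop_forall_add_mul_le hle
  have hbtop : Tendsto b atTop atTop :=
    tendsto_atTop_mono hle (tendsto_natCast_atTop_atTop.const_mul_atTop hA)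
  have hbpos : ∀ᶠ k in atTop, 0 < b k := hbtop.eventually_gt_atTop 0
  -- `W k` bounds the relative excess of the triangle `x₀, T^[k] x₀, T^[n] x₀` for the
  -- `(A - 1 / k)`-good times `n`.
  set W : ℕ → ℝ := fun k => 1 - (A - 1 / k) * k / b k
  have hW : Tendsto (fun k => √(2 * W k + W k ^ 2)) atTop (𝓝 0) := by
    have hratio :=
      ((tendsto_const_nhds (x := A)).sub tendsto_one_div_atTop_nhds_zero_nat).div hlim hA.ne'
    rw [sub_zero, div_self hA.ne'] at hratio
    have hW0 : Tendsto W atTop (𝓝 0) := by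
      simpa [W, div_div_eq_mul_div] using (tendsto_const_nhds (x := (1 : ℝ))).sub hratio
    simpa using ((hW0.const_mul 2).add (hW0.pow 2)).sqrt
  obtain ⟨γ, hγ0, hγ, hγclose⟩ := exists_geodesicRay_of_eventually_dist_le
    (σ := fun n t => g n (t / b n)) (fun n => by simpa using (hg n).apply_zero)
    (hbpos.mono fun n hn s hs t ht => (hg n).dist_div_eq hn hs ht) hbtop hW hns
    (by
      filter_upwards [hbpos, eventually_gt_atTop 0] with k hk hk0 t ht
      exact eventually_dist_geodesicSegment_orbit_le hm hT hg hbtop hns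
        (hgood (1 / k) (by positivity)) hk ht)
  refine ⟨γ, hγ0, hγ, squeeze_zero' (Eventually.of_forall fun n => by positivity) ?_
    (by simpa using (hlim.sub_const A).add (hW.const_mul A))⟩
  filter_upwards [hγclose, hbpos, eventually_gt_atTop 0] with k hk hbk hk0
  have hAk : A * k ∈ Icc 0 (b k) := ⟨by positivity, hle k⟩
  have hend := (hg k).dist_div_eq hbk ⟨dist_nonneg, le_rfl⟩ hAk
  rw [div_self hbk.ne', (hg k).apply_one, abs_of_nonneg (sub_nonneg.2 (hle k))] at hend
  rw [div_le_iff₀ (by positivity)]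
  calc dist (T^[k] x₀) (γ (A * k))
      ≤ dist (T^[k] x₀) (g k (A * k / b k)) + dist (g k (A * k / b k)) (γ (A * k)) :=
        dist_triangle _ _ _
    _ ≤ (b k - A * k) + A * k * √(2 * W k + W k ^ 2) := add_le_add hend.le (hk _ hAk)
    _ = (b k / k - A + A * √(2 * W k + W k ^ 2)) * k := by field_simp

end Metric

/-- **Karlsson–Margulis geodesic tracking for a semicontraction of a complete CAT(0)
space.**  The orbit `Tⁿx₀` sublinearly tracks a geodesic ray `γ` with speed
`A = lim (1/n) d(x, Tⁿx)` (the limit exists by subadditivity and does not depend on `x`);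
when `A = 0` the constant ray at `x₀` is allowed. -/
theorem cat0_semicontraction_tracks_geodesic
    {X : Type*} [MetricSpace X] [CompleteSpace X] [Nonempty X]
    (hcat : ∀ y₁ y₂ : X, ∃ m : X, ∀ x : X,
      dist x m ^ 2 ≤ (dist x y₁ ^ 2 + dist x y₂ ^ 2) / 2 - dist y₁ y₂ ^ 2 / 4)
    (T : X → X) (hT : ∀ x y : X, dist (T x) (T y) ≤ dist x y) :
    ∃ A : ℝ, 0 ≤ A ∧
      (∀ x : X, Tendsto (fun n : ℕ => dist x (T^[n] x) / (n : ℝ)) atTop (𝓝 A)) ∧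
      ∀ x₀ : X, ∃ γ : ℝ → X,
        γ 0 = x₀ ∧
        ((∀ s t : ℝ, 0 ≤ s → 0 ≤ t → dist (γ s) (γ t) = |s - t|) ∨
          (A = 0 ∧ ∀ t : ℝ, γ t = x₀)) ∧
        Tendsto (fun n : ℕ => dist (T^[n] x₀) (γ (A * n)) / (n : ℝ)) atTop (𝓝 0) := by
  choose m hm using hcat
  have hT' : LipschitzWith 1 T := .of_dist_le_mul fun x y => by simpa using hT x y
  obtain ⟨A, hA0, hlim, hle⟩ := hT'.exists_tendsto_dist_iterate_div
  refine ⟨A, hA0, hlim, fun x₀ => ?_⟩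
  rcases hA0.eq_or_lt with rfl | hA
  · refine ⟨fun _ => x₀, rfl, Or.inr ⟨rfl, fun _ => rfl⟩, ?_⟩
    simpa [dist_comm] using hlim x₀
  · obtain ⟨γ, hγ0, hγ, htrack⟩ := exists_geodesicRay_tracking_orbit hm hT' x₀ hA (hlim x₀) (hle x₀)
    exact ⟨γ, hγ0, Or.inl hγ, htrack⟩
end

section
/- Let (Ω, μ) be a probability space with an ergodic measure-preserving transformation T : Ω → Ω, and let U : L²(Ω, μ) → L²(Ω, μ) be the induced Koopman operator, U g := g ∘ T. Let (f_n)_{n≥1} be a sequence in L²(Ω, μ) with f_n ≥ 0 pointwise μ-a.e. and f_{n+m} ≤ f_n + Uⁿ f_m pointwise μ-a.e. for all n, m ≥ 1. Let a_n := ∫_Ω f_n dμ; then (a_n) is subadditive, so A := lim_{n→∞} a_n / n exists and A ≥ 0. Then lim_{n→∞} ‖ (1/n) f_n − A ‖_{L²(Ω, μ)} = 0. -/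
/-!
Fix a block length `m`. Cutting the orbit segment `[0, n)` into blocks of length `m` that start
at each offset `1 ≤ i ≤ m` and summing the `m` resulting subadditivity bounds gives
`m f_n ≤ ∑_{s<n} f_m ∘ T^s + R_{m,n}`, where `R_{m,n}` collects the incomplete blocks at both ends
and is bounded in `L²` uniformly in `n`. By von Neumann's mean ergodic theorem, which under
ergodicity has the constant `a_m` as limit, the positive part of `f_n/n - A` is asymptotically at
most `|a_m/m - A|` in `L²`, and this is small for large `m`. The negative part is bounded by `A`,
so its `L²` norm is controlled by its integral, which tends to zero because
`∫ (f_n/n - A) = a_n/n - A → 0`.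
-/

open MeasureTheory Filter Topology Finset
open scoped ENNReal

/-- `g n k` stands for `f n (T^[k] ω)` along a fixed orbit. -/
def IsSubadditiveCocycle (g : ℕ → ℕ → ℝ) : Prop :=
  ∀ n m k, 1 ≤ n → 1 ≤ m → g (n + m) k ≤ g n k + g m (n + k)

theorem Nat.div_sub_one_mul_add_mod_add {m d : ℕ} (hm : 0 < m) (hd : m ≤ d) :
    (d / m - 1) * m + (d % m + m) = d := by
  have h1 : m ≤ d / m * m := by
    simpa using Nat.mul_le_mul_right m ((Nat.one_le_div_iff hm).2 hd)
  have h2 := Nat.div_add_mod' d m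
  rw [Nat.sub_one_mul]
  omega

theorem sum_Icc_sum_range_mul_add_le {m n : ℕ} (q : ℕ → ℕ) (hq : ∀ i ∈ Icc 1 m, q i * m + i ≤ n)
    (F : ℕ → ℝ) (hF : ∀ s, 0 ≤ F s) :
    ∑ i ∈ Icc 1 m, ∑ t ∈ range (q i), F (t * m + i) ≤ ∑ s ∈ range n, F s := by
  have hdiv : ∀ i t, 1 ≤ i → i ≤ m → (t * m + i - 1) / m = t := fun i t h1 h2 => by
    rw [show t * m + i - 1 = (i - 1) + t * m by omega, Nat.add_mul_div_right _ _ (by omega),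
      Nat.div_eq_of_lt (by omega), zero_add]
  have hinj : Set.InjOn (fun p : (_ : ℕ) × ℕ => p.2 * m + p.1)
      ((Icc 1 m).sigma fun i => range (q i)) := by
    rintro ⟨i, t⟩ hit ⟨i', t'⟩ hit' h
    simp only [coe_sigma, Set.mem_sigma_iff, coe_Icc, Set.mem_Icc, coe_range] at hit hit' h
    obtain rfl : t = t' := by
      rw [← hdiv i t hit.1.1 hit.1.2, h, hdiv i' t' hit'.1.1 hit'.1.2]
    simp only [Sigma.mk.injEq, heq_eq_eq, and_true]
    omega
  rw [sum_sigma', ← sum_image hinj]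
  refine sum_le_sum_of_subset_of_nonneg (fun s hs => ?_) fun s _ _ => hF s
  simp only [mem_image, mem_sigma, mem_Icc, mem_range] at hs
  obtain ⟨⟨i, t⟩, ⟨hi, ht⟩, rfl⟩ := hs
  dsimp only at hi ht ⊢
  have h1 : (t + 1) * m ≤ q i * m := Nat.mul_le_mul_right m ht
  have h2 := hq i (mem_Icc.2 hi)
  rw [add_one_mul] at h1
  rw [mem_range]
  omega

namespace IsSubadditiveCocycle

variable {g : ℕ → ℕ → ℝ}

theorem le_sum_blocks (hg : IsSubadditiveCocycle g) {m r : ℕ} (hm : 1 ≤ m) (hr : 1 ≤ r)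
    (j k : ℕ) : g (j * m + r) k ≤ ∑ t ∈ range j, g m (t * m + k) + g r (j * m + k) := by
  induction j generalizing k with
  | zero => simp
  | succ j ih =>
    calc g ((j + 1) * m + r) k = g (m + (j * m + r)) k := by ring_nf
      _ ≤ g m k + g (j * m + r) (m + k) := hg _ _ _ hm (by omega)
      _ ≤ g m k + (∑ t ∈ range j, g m (t * m + (m + k)) + g r (j * m + (m + k))) := by
        gcongr; exact ih _
      _ = ∑ t ∈ range (j + 1), g m (t * m + k) + g r ((j + 1) * m + k) := by
        rw [sum_range_succ']
        simp only [add_mul, one_mul, zero_mul, zero_add, add_assoc]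
        ring

theorem mul_le_sum_add (hg : IsSubadditiveCocycle g) (hg0 : ∀ n k, 1 ≤ n → 0 ≤ g n k)
    {m n : ℕ} (hm : 1 ≤ m) (hn : 2 * m ≤ n) :
    m * g n 0 ≤ ∑ s ∈ range n, g m s + ∑ i ∈ Icc 1 m, g i 0
      + m * ∑ r ∈ Ico m (2 * m), g r (n - r) := by
  set S := ∑ r ∈ Ico m (2 * m), g r (n - r)
  -- `n = i + (q i * m + r i)`: a first block of length `i`, then `q i` blocks of length `m`,
  -- then a last block of length `m ≤ r i < 2 * m`
  set q : ℕ → ℕ := fun i => (n - i) / m - 1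
  set r : ℕ → ℕ := fun i => (n - i) % m + m
  have hr : ∀ i, m ≤ r i ∧ r i < 2 * m := fun i =>
    ⟨Nat.le_add_left _ _, by simp only [r]; have := Nat.mod_lt (n - i) (by omega : 0 < m); omega⟩
  have hqr : ∀ i ∈ Icc 1 m, q i * m + r i = n - i := fun i hi =>
    Nat.div_sub_one_mul_add_mod_add (by omega) (by simp at hi; omega)
  have hblock : ∀ i ∈ Icc 1 m, g n 0 ≤ g i 0 + ∑ t ∈ range (q i), g m (t * m + i) + S := by
    intro i hi
    have hqri := hqr i hi
    have hri := hr i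
    simp only [mem_Icc] at hi
    have hS : g (r i) (q i * m + i) ≤ S := by
      rw [show q i * m + i = n - r i by omega]
      exact single_le_sum (f := fun r => g r (n - r))
        (fun r' hr' => hg0 _ _ (by simp at hr'; omega)) (by simp [hri])
    calc g n 0 = g (i + (q i * m + r i)) 0 := by rw [hqri]; congr; omega
      _ ≤ g i 0 + g (q i * m + r i) (i + 0) := hg _ _ _ hi.1 (by omega)
      _ ≤ g i 0 + (∑ t ∈ range (q i), g m (t * m + i) + g (r i) (q i * m + i)) := by
        gcongr; exact hg.le_sum_blocks hm (by omega) _ _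
      _ ≤ g i 0 + ∑ t ∈ range (q i), g m (t * m + i) + S := by linarith
  have hsum : ∑ i ∈ Icc 1 m, ∑ t ∈ range (q i), g m (t * m + i) ≤ ∑ s ∈ range n, g m s :=
    sum_Icc_sum_range_mul_add_le q (fun i hi => by have := hqr i hi; simp at hi; omega) _
      fun s => hg0 _ _ hm
  calc (m : ℝ) * g n 0 = ∑ i ∈ Icc 1 m, g n 0 := by simp
    _ ≤ ∑ i ∈ Icc 1 m, (g i 0 + ∑ t ∈ range (q i), g m (t * m + i) + S) := sum_le_sum hblock
    _ = ∑ i ∈ Icc 1 m, g i 0 + ∑ i ∈ Icc 1 m, ∑ t ∈ range (q i), g m (t * m + i) + m * S := by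
      simp [sum_add_distrib]
    _ ≤ _ := by linarith

end IsSubadditiveCocycle

section MeanErgodic

variable {Ω : Type*} [MeasurableSpace Ω] {μ : Measure Ω} {T : Ω → Ω}

theorem MeasureTheory.MeasurePreserving.birkhoffAverage_ae_eq {E : Type*} [AddCommMonoid E]
    [Module ℝ E] (hT : MeasurePreserving T μ μ) {g g' : Ω → E} (h : g =ᵐ[μ] g') (n : ℕ) :
    birkhoffAverage ℝ T g n =ᵐ[μ] birkhoffAverage ℝ T g' n := by
  filter_upwards [ae_all_iff.2 fun k => (hT.iterate k).quasiMeasurePreserving.ae_eq h] with ω hω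
  simp_all [birkhoffAverage, birkhoffSum]

theorem MeasureTheory.Lp.coeFn_birkhoffAverage_compMeasurePreserving {E : Type*}
    [NormedAddCommGroup E] [NormedSpace ℝ E] {p : ℝ≥0∞} (hT : MeasurePreserving T μ μ)
    (x : Lp E p μ) (n : ℕ) :
    ⇑(birkhoffAverage ℝ (Lp.compMeasurePreserving T hT) _root_.id n x)
      =ᵐ[μ] birkhoffAverage ℝ T x n := by
  have hiter : ∀ᵐ ω ∂μ, ∀ k, ((Lp.compMeasurePreserving T hT)^[k] x) ω = x (T^[k] ω) :=
    ae_all_iff.2 fun k => by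
      rw [Lp.compMeasurePreserving_iterate]
      exact Lp.coeFn_compMeasurePreserving x (hT.iterate k)
  set U := Lp.compMeasurePreserving T hT (E := E) (p := p)
  filter_upwards [Lp.coeFn_smul (n : ℝ)⁻¹ (birkhoffSum U _root_.id n x),
    Lp.coeFn_finsetSum (range n) fun k => U^[k] x,
    hiter] with ω hsmul hsum hω
  simp_all [birkhoffAverage, birkhoffSum]

theorem MeasureTheory.Lp.compMeasurePreserving_const {E : Type*} [NormedAddCommGroup E]
    {p : ℝ≥0∞} [IsFiniteMeasure μ] (hT : MeasurePreserving T μ μ) (c : E) :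
    Lp.compMeasurePreserving T hT (Lp.const p μ c) = Lp.const p μ c := by
  apply Lp.ext
  filter_upwards [Lp.coeFn_compMeasurePreserving (Lp.const p μ c) hT, Lp.coeFn_const p μ c,
    hT.quasiMeasurePreserving.ae_eq (Lp.coeFn_const p μ c)] with ω h1 h2 h3
  simp_all

theorem MeasureTheory.L2.inner_const_right [IsFiniteMeasure μ] (x : Lp ℝ 2 μ) (c : ℝ) :
    inner ℝ x (Lp.const 2 μ c) = (∫ ω, x ω ∂μ) * c := by
  rw [L2.inner_def, ← integral_mul_const]
  refine integral_congr_ae ?_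
  filter_upwards [Lp.coeFn_const 2 μ c] with ω hω
  rw [hω]
  simp [mul_comm]

theorem Ergodic.exists_eq_const_of_compMeasurePreserving_eq {E : Type*} [NormedAddCommGroup E]
    {p : ℝ≥0∞} [IsFiniteMeasure μ] (hT : Ergodic T μ) {y : Lp E p μ}
    (hy : Lp.compMeasurePreserving T hT.toMeasurePreserving y = y) :
    ∃ c, y = Lp.const p μ c := by
  obtain ⟨c, hc⟩ := hT.eq_const_of_compMeasurePreserving_eq (congrArg Subtype.val hy)
  exact ⟨c, Subtype.ext hc⟩

theorem Ergodic.tendsto_birkhoffAverage_compMeasurePreserving [IsProbabilityMeasure μ]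
    (hT : Ergodic T μ) (x : Lp ℝ 2 μ) :
    Tendsto (fun n => birkhoffAverage ℝ (Lp.compMeasurePreserving T hT.toMeasurePreserving)
      _root_.id n x) atTop (𝓝 (Lp.const 2 μ (∫ ω, x ω ∂μ))) := by
  set U := (Lp.compMeasurePreservingₗᵢ ℝ T hT.toMeasurePreserving :
    Lp ℝ 2 μ →ₗᵢ[ℝ] Lp ℝ 2 μ).toContinuousLinearMap
  have hU : ⇑U = Lp.compMeasurePreserving T hT.toMeasurePreserving := rfl
  have h := U.tendsto_birkhoffAverage_orthogonalProjection
    (LinearIsometry.norm_toContinuousLinearMap_le _) x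
  rw [hU] at h
  convert h using 2
  -- by ergodicity the fixed vectors of `U` are the constants
  rw [← Submodule.starProjection_apply]
  refine (Submodule.eq_starProjection_of_mem_of_inner_eq_zero ?_ ?_).symm
  · exact Lp.compMeasurePreserving_const _ _
  · rintro w (hw : U w = w)
    obtain ⟨d, rfl⟩ := hT.exists_eq_const_of_compMeasurePreserving_eq hw
    have hconst : ∫ ω, Lp.const 2 μ (∫ ω, x ω ∂μ) ω ∂μ = ∫ ω, x ω ∂μ := by
      rw [integral_congr_ae (Lp.coeFn_const 2 μ _)]
      simp
    rw [inner_sub_left, L2.inner_const_right, L2.inner_const_right, hconst, sub_self]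

theorem Ergodic.tendsto_eLpNorm_birkhoffAverage_sub_integral [IsProbabilityMeasure μ]
    (hT : Ergodic T μ) {g : Ω → ℝ} (hg : MemLp g 2 μ) :
    Tendsto (fun n => eLpNorm (fun ω => birkhoffAverage ℝ T g n ω - ∫ ω, g ω ∂μ) 2 μ) atTop
      (𝓝 0) := by
  set B := fun n => birkhoffAverage ℝ (Lp.compMeasurePreserving T hT.toMeasurePreserving)
    _root_.id n (hg.toLp g)
  have hB := tendsto_iff_norm_sub_tendsto_zero.1
    (hT.tendsto_birkhoffAverage_compMeasurePreserving (hg.toLp g))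
  rw [integral_congr_ae hg.coeFn_toLp] at hB
  have heq : ∀ n, eLpNorm (fun ω => birkhoffAverage ℝ T g n ω - ∫ ω, g ω ∂μ) 2 μ
      = ENNReal.ofReal ‖B n - Lp.const 2 μ (∫ ω, g ω ∂μ)‖ := by
    intro n
    rw [Lp.norm_def, ENNReal.ofReal_toReal (Lp.eLpNorm_ne_top _)]
    refine eLpNorm_congr_ae ?_
    filter_upwards [Lp.coeFn_sub (B n) (Lp.const 2 μ (∫ ω, g ω ∂μ)),
      Lp.coeFn_birkhoffAverage_compMeasurePreserving hT.toMeasurePreserving (hg.toLp g) n,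
      hT.toMeasurePreserving.birkhoffAverage_ae_eq hg.coeFn_toLp n,
      Lp.coeFn_const 2 μ (∫ ω, g ω ∂μ)] with ω h1 h2 h3 h4
    rw [h1, Pi.sub_apply, h2, h3, h4]
    rfl
  simp_rw [heq]
  simpa [Function.comp_def] using (ENNReal.continuous_ofReal.tendsto 0).comp hB

end MeanErgodic

theorem ENNReal.tendsto_nhds_zero_of_eventually_le_add {ι κ : Type*} {l : Filter ι}
    {l' : Filter κ} [l'.NeBot] {x : ι → ℝ≥0∞} {y : κ → ι → ℝ≥0∞} {c : κ → ℝ≥0∞}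
    (hc : Tendsto c l' (𝓝 0))
    (hxy : ∀ᶠ k in l', Tendsto (y k) l (𝓝 0) ∧ ∀ᶠ i in l, x i ≤ y k i + c k) :
    Tendsto x l (𝓝 0) := by
  refine ENNReal.tendsto_nhds_zero.2 fun ε hε => ?_
  have hε2 : 0 < ε / 2 := ENNReal.half_pos hε.ne'
  obtain ⟨k, hck, hyk, hxk⟩ := ((hc.eventually (gt_mem_nhds hε2)).and hxy).exists
  filter_upwards [hxk, hyk.eventually (gt_mem_nhds hε2)] with i hxi hyi
  calc x i ≤ y k i + c k := hxi
    _ ≤ ε / 2 + ε / 2 := add_le_add hyi.le hck.le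
    _ = ε := ENNReal.add_halves ε

section NegativePart

variable {Ω : Type*} [MeasurableSpace Ω] {μ : Measure Ω}

theorem eLpNorm_two_rpow_le_mul_eLpNorm_one {g : Ω → ℝ} {C : ℝ}
    (hg : ∀ᵐ ω ∂μ, 0 ≤ g ω ∧ g ω ≤ C) :
    eLpNorm g 2 μ ^ (2 : ℝ) ≤ ENNReal.ofReal C * eLpNorm g 1 μ := by
  have h2 : eLpNorm g 2 μ ^ (2 : ℝ) = ∫⁻ ω, ‖g ω‖ₑ ^ (2 : ℝ) ∂μ := by
    simpa using eLpNorm_nnreal_pow_eq_lintegral (μ := μ) (f := g) (p := 2) two_ne_zero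
  rw [h2, eLpNorm_one_eq_lintegral_enorm, ← lintegral_const_mul' _ _ ENNReal.ofReal_ne_top]
  refine lintegral_mono_ae ?_
  filter_upwards [hg] with ω ⟨h0, hC⟩
  rw [Real.enorm_of_nonneg h0, ENNReal.ofReal_rpow_of_nonneg h0 zero_le_two,
    ← ENNReal.ofReal_mul (h0.trans hC)]
  refine ENNReal.ofReal_le_ofReal ?_
  rw [Real.rpow_two]
  nlinarith

theorem tendsto_eLpNorm_two_of_tendsto_integral {ι : Type*} {l : Filter ι} {g : ι → Ω → ℝ}
    {C : ℝ} (hg : ∀ᶠ i in l, Integrable (g i) μ)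
    (hbound : ∀ᶠ i in l, ∀ᵐ ω ∂μ, 0 ≤ g i ω ∧ g i ω ≤ C)
    (hint : Tendsto (fun i => ∫ ω, g i ω ∂μ) l (𝓝 0)) :
    Tendsto (fun i => eLpNorm (g i) 2 μ) l (𝓝 0) := by
  have hL1 : Tendsto (fun i => eLpNorm (g i) 1 μ) l (𝓝 0) := by
    have h := (ENNReal.continuous_ofReal.tendsto 0).comp hint
    rw [ENNReal.ofReal_zero] at h
    refine h.congr' ?_
    filter_upwards [hg, hbound] with i hi hbi
    rw [Function.comp_apply, ofReal_integral_eq_lintegral_ofReal hi (hbi.mono fun _ h => h.1),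
      eLpNorm_one_eq_lintegral_enorm]
    refine lintegral_congr_ae ?_
    filter_upwards [hbi] with ω hω
    rw [Real.enorm_of_nonneg hω.1]
  have hsq : Tendsto (fun i => eLpNorm (g i) 2 μ ^ (2 : ℝ)) l (𝓝 0) := by
    refine tendsto_of_tendsto_of_tendsto_of_le_of_le' tendsto_const_nhds
      (by simpa using ENNReal.Tendsto.const_mul hL1 (.inr ENNReal.ofReal_ne_top) :
        Tendsto (fun i => ENNReal.ofReal C * eLpNorm (g i) 1 μ) l (𝓝 0))
      (Eventually.of_forall fun _ => bot_le) ?_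
    filter_upwards [hbound] with i hi
    exact eLpNorm_two_rpow_le_mul_eLpNorm_one hi
  have h := ((ENNReal.continuous_rpow_const (y := (2 : ℝ)⁻¹)).tendsto 0).comp hsq
  simp only [Function.comp_def, ENNReal.rpow_rpow_inv two_ne_zero,
    ENNReal.zero_rpow_of_pos (inv_pos.2 two_pos)] at h
  exact h

theorem tendsto_eLpNorm_of_tendsto_eLpNorm_posPart [IsProbabilityMeasure μ] {ι : Type*}
    {l : Filter ι} {Z : ι → Ω → ℝ} {C : ℝ} (hZ : ∀ᶠ i in l, Integrable (Z i) μ)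
    (hC : ∀ᶠ i in l, ∀ᵐ ω ∂μ, -C ≤ Z i ω)
    (hint : Tendsto (fun i => ∫ ω, Z i ω ∂μ) l (𝓝 0))
    (hpos : Tendsto (fun i => eLpNorm (fun ω => max (Z i ω) 0) 2 μ) l (𝓝 0)) :
    Tendsto (fun i => eLpNorm (Z i) 2 μ) l (𝓝 0) := by
  set P := fun i ω => max (Z i ω) 0
  set N := fun i ω => max (-Z i ω) 0
  have hPN : ∀ i, Z i = P i - N i := fun i => funext fun ω => (max_zero_sub_eq_self _).symm
  have hP : ∀ i, Integrable (Z i) μ → Integrable (P i) μ := fun _ h => h.pos_part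
  have hN : ∀ i, Integrable (Z i) μ → Integrable (N i) μ := fun _ h => h.neg_part
  have hP_int : Tendsto (fun i => ∫ ω, P i ω ∂μ) l (𝓝 0) := by
    refine (tendsto_integral_of_L1' 0 aestronglyMeasurable_zero (hZ.mono hP) ?_).trans (by simp)
    refine tendsto_of_tendsto_of_tendsto_of_le_of_le' tendsto_const_nhds hpos
      (Eventually.of_forall fun _ => bot_le) ?_
    filter_upwards [hZ] with i hi
    simpa using eLpNorm_le_eLpNorm_of_exponent_le one_le_two (hP i hi).aestronglyMeasurable
  have hN_int : Tendsto (fun i => ∫ ω, N i ω ∂μ) l (𝓝 0) := by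
    have h := hP_int.sub hint
    rw [sub_zero] at h
    refine h.congr' ?_
    filter_upwards [hZ] with i hi
    rw [hPN i, Pi.sub_def, integral_sub (hP i hi) (hN i hi)]
    ring
  have hN_L2 : Tendsto (fun i => eLpNorm (N i) 2 μ) l (𝓝 0) := by
    refine tendsto_eLpNorm_two_of_tendsto_integral (C := max C 0) (hZ.mono hN) ?_ hN_int
    filter_upwards [hC] with i hi
    filter_upwards [hi] with ω hω
    exact ⟨le_max_right _ _, max_le_max (by linarith) le_rfl⟩
  refine tendsto_of_tendsto_of_tendsto_of_le_of_le' tendsto_const_nhds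
    (by simpa using hpos.add hN_L2) (Eventually.of_forall fun _ => bot_le) ?_
  filter_upwards [hZ] with i hi
  conv_lhs => rw [hPN i]
  exact eLpNorm_sub_le (hP i hi).aestronglyMeasurable (hN i hi).aestronglyMeasurable one_le_two

end NegativePart

section SubadditiveProcess

variable {Ω : Type*} [MeasurableSpace Ω] {μ : Measure Ω} {T : Ω → Ω} {f : ℕ → Ω → ℝ}

theorem MeasureTheory.MeasurePreserving.integral_comp_of_aestronglyMeasurable
    (hT : MeasurePreserving T μ μ) {g : Ω → ℝ} (hg : AEStronglyMeasurable g μ) :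
    ∫ ω, g (T ω) ∂μ = ∫ ω, g ω ∂μ := by
  conv_rhs => rw [← hT.map_eq]
  exact (integral_map hT.measurable.aemeasurable (by rwa [hT.map_eq])).symm

theorem memLp_birkhoffAverage (hT : MeasurePreserving T μ μ) {g : Ω → ℝ} {p : ℝ≥0∞}
    (hg : MemLp g p μ) (n : ℕ) : MemLp (birkhoffAverage ℝ T g n) p μ := by
  have : birkhoffAverage ℝ T g n = (n : ℝ)⁻¹ • ∑ k ∈ range n, g ∘ T^[k] := by
    ext ω
    simp [birkhoffAverage, birkhoffSum]
  rw [this]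
  exact (memLp_finsetSum' _ fun k _ => hg.comp_measurePreserving (hT.iterate k)).const_smul _

theorem integral_add_le_of_subadditive (hT : MeasurePreserving T μ μ)
    (hint : ∀ n, 1 ≤ n → Integrable (f n) μ)
    (hsub : ∀ n m : ℕ, 1 ≤ n → 1 ≤ m → ∀ᵐ ω ∂μ, f (n + m) ω ≤ f n ω + f m (T^[n] ω))
    {n m : ℕ} (hn : 1 ≤ n) (hm : 1 ≤ m) :
    ∫ ω, f (n + m) ω ∂μ ≤ ∫ ω, f n ω ∂μ + ∫ ω, f m ω ∂μ := by
  have hcomp : Integrable (fun ω => f m (T^[n] ω)) μ :=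
    (hT.iterate n).integrable_comp_of_integrable (hint m hm)
  calc ∫ ω, f (n + m) ω ∂μ ≤ ∫ ω, f n ω + f m (T^[n] ω) ∂μ :=
        integral_mono_ae (hint _ (by omega)) ((hint n hn).add hcomp) (hsub n m hn hm)
    _ = ∫ ω, f n ω ∂μ + ∫ ω, f m ω ∂μ := by
      rw [integral_add (hint n hn) hcomp,
        (hT.iterate n).integral_comp_of_aestronglyMeasurable (hint m hm).aestronglyMeasurable]

theorem ae_isSubadditiveCocycle_orbit (hT : MeasurePreserving T μ μ)
    (hsub : ∀ n m : ℕ, 1 ≤ n → 1 ≤ m → ∀ᵐ ω ∂μ, f (n + m) ω ≤ f n ω + f m (T^[n] ω)) :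
    ∀ᵐ ω ∂μ, IsSubadditiveCocycle fun n k => f n (T^[k] ω) := by
  have h : ∀ᵐ ω ∂μ, ∀ n m : ℕ, 1 ≤ n → 1 ≤ m → f (n + m) ω ≤ f n ω + f m (T^[n] ω) := by
    simpa only [ae_all_iff, eventually_imp_distrib_left] using hsub
  filter_upwards [ae_all_iff.2 fun k => (hT.iterate k).quasiMeasurePreserving.ae h]
    with ω hω n m k hn hm
  simpa only [Function.iterate_add_apply] using hω k n m hn hm

theorem ae_nonneg_orbit (hT : MeasurePreserving T μ μ)
    (hnonneg : ∀ n, 1 ≤ n → ∀ᵐ ω ∂μ, 0 ≤ f n ω) :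
    ∀ᵐ ω ∂μ, ∀ n k, 1 ≤ n → 0 ≤ f n (T^[k] ω) := by
  have h : ∀ᵐ ω ∂μ, ∀ n, 1 ≤ n → 0 ≤ f n ω := by
    simpa only [ae_all_iff, eventually_imp_distrib_left] using hnonneg
  filter_upwards [ae_all_iff.2 fun k => (hT.iterate k).quasiMeasurePreserving.ae h]
    with ω hω n k hn
  exact hω k n hn

variable (T f) in
/-- Dominates the incomplete first and last blocks of `IsSubadditiveCocycle.mul_le_sum_add`
along the orbit; the length `r ∈ [m, 2m)` of a last block depends on the offset, so all such
lengths are summed. -/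
def blockRemainder (m n : ℕ) : Ω → ℝ :=
  ∑ i ∈ Icc 1 m, f i + (m : ℝ) • ∑ r ∈ Ico m (2 * m), f r ∘ T^[n - r]

theorem ae_mul_le_birkhoffSum_add_blockRemainder (hT : MeasurePreserving T μ μ)
    (hnonneg : ∀ n, 1 ≤ n → ∀ᵐ ω ∂μ, 0 ≤ f n ω)
    (hsub : ∀ n m : ℕ, 1 ≤ n → 1 ≤ m → ∀ᵐ ω ∂μ, f (n + m) ω ≤ f n ω + f m (T^[n] ω))
    {m : ℕ} (hm : 1 ≤ m) :
    ∀ᵐ ω ∂μ, ∀ n, 2 * m ≤ n →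
      m * f n ω ≤ birkhoffSum T (f m) n ω + blockRemainder T f m n ω := by
  filter_upwards [ae_isSubadditiveCocycle_orbit hT hsub, ae_nonneg_orbit hT hnonneg]
    with ω hcocycle hnonneg' n hn
  simpa [birkhoffSum, blockRemainder, Finset.sum_apply, add_assoc]
    using hcocycle.mul_le_sum_add hnonneg' hm hn

theorem memLp_blockRemainder (hT : MeasurePreserving T μ μ)
    (hL2 : ∀ n, 1 ≤ n → MemLp (f n) 2 μ) (m n : ℕ) :
    MemLp (blockRemainder T f m n) 2 μ :=
  (memLp_finsetSum' _ fun i hi => hL2 i (mem_Icc.1 hi).1).add <|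
    (memLp_finsetSum' _ fun r hr => (hL2 r (by simp at hr; omega)).comp_measurePreserving
      (hT.iterate _)).const_smul _

theorem eLpNorm_blockRemainder_le (hT : MeasurePreserving T μ μ)
    (hL2 : ∀ n, 1 ≤ n → MemLp (f n) 2 μ) (m n : ℕ) :
    eLpNorm (blockRemainder T f m n) 2 μ ≤
      ∑ i ∈ Icc 1 m, eLpNorm (f i) 2 μ + m * ∑ r ∈ Ico m (2 * m), eLpNorm (f r) 2 μ := by
  have hi : ∀ i ∈ Icc 1 m, MemLp (f i) 2 μ := fun i hi => hL2 i (mem_Icc.1 hi).1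
  have hr : ∀ r ∈ Ico m (2 * m), MemLp (f r) 2 μ := fun r hr => hL2 r (by simp at hr; omega)
  have hr' : ∀ r ∈ Ico m (2 * m), MemLp (f r ∘ T^[n - r]) 2 μ := fun r hr' =>
    (hr r hr').comp_measurePreserving (hT.iterate _)
  refine (eLpNorm_add_le (memLp_finsetSum' _ hi).aestronglyMeasurable
    ((memLp_finsetSum' _ hr').const_smul _).aestronglyMeasurable one_le_two).trans ?_
  rw [eLpNorm_const_smul]
  gcongr
  · exact eLpNorm_sum_le (fun i hi' => (hi i hi').aestronglyMeasurable) one_le_two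
  · simp
  · refine (eLpNorm_sum_le (fun r hr'' => (hr' r hr'').aestronglyMeasurable) one_le_two).trans ?_
    gcongr with r hr''
    exact (eLpNorm_comp_measurePreserving (hr r hr'').aestronglyMeasurable (hT.iterate _)).le

theorem posPart_div_sub_le_abs {m n : ℕ} (hm : 1 ≤ m) (hn : 1 ≤ n) {x S R a A : ℝ}
    (h : m * x ≤ S + R) :
    max (x / n - A) 0 ≤ |(m : ℝ)⁻¹ * ((n : ℝ)⁻¹ * S - a) + ((m : ℝ) * n)⁻¹ * R + (a / m - A)| := by
  have hm' : (0 : ℝ) < m := by exact_mod_cast hm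
  have hn' : (0 : ℝ) < n := by exact_mod_cast hn
  have hW : (m : ℝ)⁻¹ * ((n : ℝ)⁻¹ * S - a) + ((m : ℝ) * n)⁻¹ * R + (a / m - A)
      = (S + R) / (m * n) - A := by
    field_simp
    ring
  have hx : x / n = m * x / (m * n) := by field_simp
  refine max_le ((le_abs_self _).trans' ?_) (abs_nonneg _)
  rw [hW, hx]
  gcongr

theorem tendsto_eLpNorm_smul_blockRemainder (hT : MeasurePreserving T μ μ)
    (hL2 : ∀ n, 1 ≤ n → MemLp (f n) 2 μ) (m : ℕ) :
    Tendsto (fun n : ℕ => eLpNorm (((m : ℝ) * n)⁻¹ • blockRemainder T f m n) 2 μ) atTop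
      (𝓝 0) := by
  set C := ∑ i ∈ Icc 1 m, eLpNorm (f i) 2 μ + m * ∑ r ∈ Ico m (2 * m), eLpNorm (f r) 2 μ
  have hC : C ≠ ⊤ := ENNReal.add_ne_top.2
    ⟨ENNReal.sum_ne_top.2 fun i hi => (hL2 i (mem_Icc.1 hi).1).eLpNorm_ne_top,
      ENNReal.mul_ne_top (ENNReal.natCast_ne_top m)
        (ENNReal.sum_ne_top.2 fun r hr => (hL2 r (by simp at hr; omega)).eLpNorm_ne_top)⟩
  have hinv : Tendsto (fun n : ℕ => ‖((m : ℝ) * n)⁻¹‖ₑ * C) atTop (𝓝 0) := by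
    have h := (tendsto_inv_atTop_nhds_zero_nat (𝕜 := ℝ)).const_mul (m : ℝ)⁻¹
    simp_rw [mul_zero, ← mul_inv] at h
    have h' := ENNReal.Tendsto.mul_const h.enorm (.inr hC)
    rwa [enorm_zero, zero_mul] at h'
  refine tendsto_of_tendsto_of_tendsto_of_le_of_le tendsto_const_nhds hinv
    (fun _ => bot_le) fun n => ?_
  rw [eLpNorm_const_smul]
  gcongr
  exact eLpNorm_blockRemainder_le hT hL2 m n

theorem eLpNorm_posPart_le_of_subadditive [IsProbabilityMeasure μ] (hT : MeasurePreserving T μ μ)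
    (hL2 : ∀ n, 1 ≤ n → MemLp (f n) 2 μ)
    (hnonneg : ∀ n, 1 ≤ n → ∀ᵐ ω ∂μ, 0 ≤ f n ω)
    (hsub : ∀ n m : ℕ, 1 ≤ n → 1 ≤ m → ∀ᵐ ω ∂μ, f (n + m) ω ≤ f n ω + f m (T^[n] ω))
    (A : ℝ) {m n : ℕ} (hm : 1 ≤ m) (hn : 2 * m ≤ n) :
    eLpNorm (fun ω => max (f n ω / n - A) 0) 2 μ ≤
      eLpNorm ((m : ℝ)⁻¹ • fun ω => birkhoffAverage ℝ T (f m) n ω - ∫ ω, f m ω ∂μ) 2 μ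
        + eLpNorm (((m : ℝ) * n)⁻¹ • blockRemainder T f m n) 2 μ
        + ‖(∫ ω, f m ω ∂μ) / m - A‖ₑ := by
  set W₁ := (m : ℝ)⁻¹ • fun ω => birkhoffAverage ℝ T (f m) n ω - ∫ ω, f m ω ∂μ
  set W₂ := ((m : ℝ) * n)⁻¹ • blockRemainder T f m n
  have hW₁ : AEStronglyMeasurable W₁ μ :=
    (((memLp_birkhoffAverage hT (hL2 m hm) n).sub (memLp_const _)).const_smul
      _).aestronglyMeasurable
  have hW₂ : AEStronglyMeasurable W₂ μ :=
    ((memLp_blockRemainder hT hL2 m n).const_smul _).aestronglyMeasurable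
  calc eLpNorm (fun ω => max (f n ω / n - A) 0) 2 μ
      ≤ eLpNorm (W₁ + W₂ + fun _ => (∫ ω, f m ω ∂μ) / m - A) 2 μ := by
        refine eLpNorm_mono_ae ?_
        filter_upwards [ae_mul_le_birkhoffSum_add_blockRemainder hT hnonneg hsub hm] with ω hω
        rw [Real.norm_of_nonneg (le_max_right _ _)]
        convert posPart_div_sub_le_abs (n := n) (a := ∫ ω, f m ω ∂μ) hm (by omega)
          (hω n hn) using 1
        simp [W₁, W₂, birkhoffAverage, Real.norm_eq_abs]
    _ ≤ eLpNorm (W₁ + W₂) 2 μ + eLpNorm (fun _ => (∫ ω, f m ω ∂μ) / m - A) 2 μ :=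
        eLpNorm_add_le (hW₁.add hW₂) aestronglyMeasurable_const one_le_two
    _ ≤ eLpNorm W₁ 2 μ + eLpNorm W₂ 2 μ + ‖(∫ ω, f m ω ∂μ) / m - A‖ₑ := by
        gcongr
        · exact eLpNorm_add_le hW₁ hW₂ one_le_two
        · rw [eLpNorm_const _ two_ne_zero (IsProbabilityMeasure.ne_zero μ)]
          simp

theorem tendsto_eLpNorm_posPart_of_subadditive [IsProbabilityMeasure μ] (hT : Ergodic T μ)
    (hL2 : ∀ n, 1 ≤ n → MemLp (f n) 2 μ)
    (hnonneg : ∀ n, 1 ≤ n → ∀ᵐ ω ∂μ, 0 ≤ f n ω)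
    (hsub : ∀ n m : ℕ, 1 ≤ n → 1 ≤ m → ∀ᵐ ω ∂μ, f (n + m) ω ≤ f n ω + f m (T^[n] ω))
    {A : ℝ} (hA : Tendsto (fun n : ℕ => (∫ ω, f n ω ∂μ) / n) atTop (𝓝 A)) :
    Tendsto (fun n : ℕ => eLpNorm (fun ω => max (f n ω / n - A) 0) 2 μ) atTop (𝓝 0) := by
  refine ENNReal.tendsto_nhds_zero_of_eventually_le_add
    (c := fun m : ℕ => ‖(∫ ω, f m ω ∂μ) / m - A‖ₑ)
    (y := fun (m n : ℕ) =>
      eLpNorm ((m : ℝ)⁻¹ • fun ω => birkhoffAverage ℝ T (f m) n ω - ∫ ω, f m ω ∂μ) 2 μ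
        + eLpNorm (((m : ℝ) * n)⁻¹ • blockRemainder T f m n) 2 μ)
    (by simpa using (hA.sub_const A).enorm) ?_
  filter_upwards [eventually_ge_atTop 1] with m hm
  refine ⟨?_, ?_⟩
  · have hbirk := ENNReal.Tendsto.const_mul
      (hT.tendsto_eLpNorm_birkhoffAverage_sub_integral (hL2 m hm))
      (.inr (enorm_ne_top (x := (m : ℝ)⁻¹)))
    simpa [eLpNorm_const_smul] using
      hbirk.add (tendsto_eLpNorm_smul_blockRemainder hT.1 hL2 m)
  · filter_upwards [eventually_ge_atTop (2 * m)] with n hn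
    exact eLpNorm_posPart_le_of_subadditive hT.1 hL2 hnonneg hsub A hm hn

end SubadditiveProcess

/-- **Mean (L²) Kingman subadditive ergodic theorem.**
For a nonnegative subadditive sequence `f_{n+m} ≤ f_n + f_m ∘ T^n` in `L²`, the averages
`a_n = ∫ f_n` are subadditive, `A = lim a_n/n ≥ 0`, and `(1/n) f_n → A` in `L²`. -/
theorem mean_kingman_subadditive_ergodic
    {Ω : Type*} [MeasurableSpace Ω] {μ : Measure Ω} [IsProbabilityMeasure μ]
    {T : Ω → Ω} (hT : Ergodic T μ)
    (f : ℕ → Ω → ℝ)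
    (hL2 : ∀ n, 1 ≤ n → MemLp (f n) 2 μ)
    (hnonneg : ∀ n, 1 ≤ n → ∀ᵐ ω ∂μ, 0 ≤ f n ω)
    (hsub : ∀ n m : ℕ, 1 ≤ n → 1 ≤ m →
      ∀ᵐ ω ∂μ, f (n + m) ω ≤ f n ω + f m (T^[n] ω))
    (A : ℝ)
    (hA : Tendsto (fun n : ℕ => (∫ ω, f n ω ∂μ) / (n : ℝ)) atTop (𝓝 A)) :
    (∀ n m : ℕ, 1 ≤ n → 1 ≤ m →
      (∫ ω, f (n + m) ω ∂μ) ≤ (∫ ω, f n ω ∂μ) + (∫ ω, f m ω ∂μ)) ∧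
    0 ≤ A ∧
    Tendsto (fun n : ℕ => eLpNorm (fun ω => f n ω / (n : ℝ) - A) 2 μ) atTop (𝓝 0) := by
  have hint : ∀ n, 1 ≤ n → Integrable (f n) μ := fun n hn => (hL2 n hn).integrable one_le_two
  have hA0 : 0 ≤ A := ge_of_tendsto hA <| by
    filter_upwards [eventually_ge_atTop 1] with n hn
    exact div_nonneg (integral_nonneg_of_ae (hnonneg n hn)) n.cast_nonneg
  refine ⟨fun n m hn hm => integral_add_le_of_subadditive hT.1 hint hsub hn hm, hA0,
    tendsto_eLpNorm_of_tendsto_eLpNorm_posPart (C := A) ?_ ?_ ?_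
      (tendsto_eLpNorm_posPart_of_subadditive hT hL2 hnonneg hsub hA)⟩
  · filter_upwards [eventually_ge_atTop 1] with n hn
    exact ((hint n hn).div_const _).sub (integrable_const A)
  · filter_upwards [eventually_ge_atTop 1] with n hn
    filter_upwards [hnonneg n hn] with ω hω
    linarith [div_nonneg hω n.cast_nonneg]
  · have h := hA.sub_const A
    rw [sub_self] at h
    refine h.congr' ?_
    filter_upwards [eventually_ge_atTop 1] with n hn
    rw [integral_sub ((hint n hn).div_const _) (integrable_const A), integral_div]
    simp
end
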